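/- arXiv:2602.01427 — 9 statements merged into one kernel-verified Lean document; each statement's English description precedes it below -/
import Mathlib

section
/- Let V_D(λ) := λρ + λε·log ∫_Y exp(f(y)/(λε)) dQ(y). Then V_D is a convex function of λ on the interval (0, ∞). -/
open MeasureTheory

/-- Hölder's inequality for real integrals of nonnegative functions. -/
lemma holder_aux {Y : Type*} [MeasurableSpace Y] (Q : Measure Y)
    {G H : Y → ℝ} (hGm : Measurable G) (hHm : Measurable H)
    (hGi : Integrable G Q) (hHi : Integrable H Q)
    (hGp : ∀ y, 0 ≤ G y) (hHp : ∀ y, 0 ≤ H y)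
    {α β : ℝ} (hα : 0 < α) (hβ : 0 < β) (hab : α + β = 1)
    (hGHi : Integrable (fun y => G y ^ α * H y ^ β) Q) :
    ∫ y, G y ^ α * H y ^ β ∂Q ≤ (∫ y, G y ∂Q) ^ α * (∫ y, H y ∂Q) ^ β := by
  have hα1 : α < 1 := by linarith
  have hpq : Real.HolderConjugate (1/α) (1/β) := by
    constructor
    · rw [one_div, one_div, inv_inv, inv_inv, inv_one]; exact hab
    · positivity
    · positivity
  have key := ENNReal.lintegral_mul_le_Lp_mul_Lq Q hpq
    (f := fun y => (ENNReal.ofReal (G y)) ^ α)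
    (g := fun y => (ENNReal.ofReal (H y)) ^ β)
    ((hGm.ennreal_ofReal.pow_const α).aemeasurable)
    ((hHm.ennreal_ofReal.pow_const β).aemeasurable)
  have hGpow : ∀ y, ((ENNReal.ofReal (G y)) ^ α) ^ (1/α) = ENNReal.ofReal (G y) := by
    intro y
    rw [← ENNReal.rpow_mul, mul_one_div, div_self hα.ne', ENNReal.rpow_one]
  have hHpow : ∀ y, ((ENNReal.ofReal (H y)) ^ β) ^ (1/β) = ENNReal.ofReal (H y) := by
    intro y
    rw [← ENNReal.rpow_mul, mul_one_div, div_self hβ.ne', ENNReal.rpow_one]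
  simp only [hGpow, hHpow, Pi.mul_apply, one_div_one_div] at key
  have hLHS : ∫⁻ y, (ENNReal.ofReal (G y)) ^ α * (ENNReal.ofReal (H y)) ^ β ∂Q
      = ENNReal.ofReal (∫ y, G y ^ α * H y ^ β ∂Q) := by
    rw [MeasureTheory.ofReal_integral_eq_lintegral_ofReal hGHi
      (Filter.Eventually.of_forall fun y =>
        mul_nonneg (Real.rpow_nonneg (hGp y) α) (Real.rpow_nonneg (hHp y) β))]
    refine lintegral_congr fun y => ?_
    rw [ENNReal.ofReal_mul (Real.rpow_nonneg (hGp y) α),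
      ENNReal.ofReal_rpow_of_nonneg (hGp y) hα.le,
      ENNReal.ofReal_rpow_of_nonneg (hHp y) hβ.le]
  have hG : ∫⁻ y, ENNReal.ofReal (G y) ∂Q = ENNReal.ofReal (∫ y, G y ∂Q) :=
    (MeasureTheory.ofReal_integral_eq_lintegral_ofReal hGi
      (Filter.Eventually.of_forall hGp)).symm
  have hH : ∫⁻ y, ENNReal.ofReal (H y) ∂Q = ENNReal.ofReal (∫ y, H y ∂Q) :=
    (MeasureTheory.ofReal_integral_eq_lintegral_ofReal hHi
      (Filter.Eventually.of_forall hHp)).symm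
  rw [hLHS, hG, hH] at key
  have hIG : 0 ≤ ∫ y, G y ∂Q := integral_nonneg hGp
  have hIH : 0 ≤ ∫ y, H y ∂Q := integral_nonneg hHp
  rw [ENNReal.ofReal_rpow_of_nonneg hIG hα.le,
    ENNReal.ofReal_rpow_of_nonneg hIH hβ.le,
    ← ENNReal.ofReal_mul (Real.rpow_nonneg hIG α)] at key
  exact (ENNReal.ofReal_le_ofReal_iff
    (mul_nonneg (Real.rpow_nonneg hIG α) (Real.rpow_nonneg hIH β))).mp key

/-- Integrability of `exp (f y / μ)` for `μ > 0`. -/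
lemma integrable_exp_div {Y : Type*} [MeasurableSpace Y] (Q : Measure Y)
    [IsProbabilityMeasure Q] (f : Y → ℝ) (hf : Measurable f) (C : ℝ)
    (hfC : ∀ y, |f y| ≤ C) {μ : ℝ} (hμ : 0 < μ) :
    Integrable (fun y => Real.exp (f y / μ)) Q := by
  refine Integrable.mono' (integrable_const (Real.exp (C / μ)))
    ((hf.div_const μ).exp.aestronglyMeasurable)
    (Filter.Eventually.of_forall fun y => ?_)
  rw [Real.norm_eq_abs, abs_of_pos (Real.exp_pos _)]
  refine Real.exp_le_exp.mpr ?_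
  gcongr
  exact le_of_abs_le (hfC y)

/-- Positivity of the integral. -/
lemma integral_exp_div_pos {Y : Type*} [MeasurableSpace Y] (Q : Measure Y)
    [IsProbabilityMeasure Q] (f : Y → ℝ) (hf : Measurable f) (C : ℝ)
    (hfC : ∀ y, |f y| ≤ C) {μ : ℝ} (hμ : 0 < μ) :
    0 < ∫ y, Real.exp (f y / μ) ∂Q := by
  calc (0:ℝ) < Real.exp (-C / μ) := Real.exp_pos _
    _ = ∫ _y, Real.exp (-C / μ) ∂Q := by simp
    _ ≤ ∫ y, Real.exp (f y / μ) ∂Q := by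
        refine integral_mono (integrable_const _)
          (integrable_exp_div Q f hf C hfC hμ) fun y => ?_
        refine Real.exp_le_exp.mpr ?_
        gcongr
        exact neg_le_of_abs_le (hfC y)

/-- The key inequality for convexity of `μ ↦ μ * log ∫ exp(f/μ)`. -/
lemma key_ineq {Y : Type*} [MeasurableSpace Y] (Q : Measure Y)
    [IsProbabilityMeasure Q] (f : Y → ℝ) (hf : Measurable f) (C : ℝ)
    (hfC : ∀ y, |f y| ≤ C) {μ₁ μ₂ a b : ℝ} (h1 : 0 < μ₁) (h2 : 0 < μ₂)
    (ha : 0 < a) (hb : 0 < b) (hab : a + b = 1) :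
    (a * μ₁ + b * μ₂) * Real.log (∫ y, Real.exp (f y / (a * μ₁ + b * μ₂)) ∂Q)
      ≤ a * (μ₁ * Real.log (∫ y, Real.exp (f y / μ₁) ∂Q))
        + b * (μ₂ * Real.log (∫ y, Real.exp (f y / μ₂) ∂Q)) := by
  set s := a * μ₁ + b * μ₂ with hs_def
  have hs : 0 < s := by positivity
  set α := a * μ₁ / s with hα_def
  set β := b * μ₂ / s with hβ_def
  have hα : 0 < α := by positivity
  have hβ : 0 < β := by positivity
  have hαβ : α + β = 1 := by
    rw [hα_def, hβ_def, ← add_div]; exact div_self hs.ne'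
  have hpt : ∀ y, Real.exp (f y / s)
      = Real.exp (f y / μ₁) ^ α * Real.exp (f y / μ₂) ^ β := by
    intro y
    rw [← Real.exp_mul, ← Real.exp_mul, ← Real.exp_add]
    congr 1
    have e1 : f y / μ₁ * α = f y * a / s := by
      rw [hα_def]; field_simp
    have e2 : f y / μ₂ * β = f y * b / s := by
      rw [hβ_def]; field_simp
    rw [e1, e2, ← add_div, ← mul_add, hab, mul_one]
  have hint : ∫ y, Real.exp (f y / s) ∂Q
      = ∫ y, Real.exp (f y / μ₁) ^ α * Real.exp (f y / μ₂) ^ β ∂Q :=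
    integral_congr_ae (Filter.Eventually.of_forall hpt)
  have hGHi : Integrable (fun y => Real.exp (f y / μ₁) ^ α * Real.exp (f y / μ₂) ^ β) Q := by
    refine (integrable_exp_div Q f hf C hfC hs).congr
      (Filter.Eventually.of_forall fun y => hpt y)
  have holder := holder_aux Q ((hf.div_const μ₁).exp) ((hf.div_const μ₂).exp)
    (integrable_exp_div Q f hf C hfC h1) (integrable_exp_div Q f hf C hfC h2)
    (fun y => (Real.exp_pos _).le) (fun y => (Real.exp_pos _).le) hα hβ hαβ hGHi
  have hI1 : 0 < ∫ y, Real.exp (f y / μ₁) ∂Q := integral_exp_div_pos Q f hf C hfC h1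
  have hI2 : 0 < ∫ y, Real.exp (f y / μ₂) ∂Q := integral_exp_div_pos Q f hf C hfC h2
  have hIs : 0 < ∫ y, Real.exp (f y / s) ∂Q := integral_exp_div_pos Q f hf C hfC hs
  have hlog : Real.log (∫ y, Real.exp (f y / s) ∂Q)
      ≤ α * Real.log (∫ y, Real.exp (f y / μ₁) ∂Q)
        + β * Real.log (∫ y, Real.exp (f y / μ₂) ∂Q) := by
    rw [← Real.log_rpow hI1, ← Real.log_rpow hI2,
      ← Real.log_mul (Real.rpow_pos_of_pos hI1 α).ne' (Real.rpow_pos_of_pos hI2 β).ne']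
    apply Real.log_le_log hIs
    rw [hint]
    exact holder
  have := mul_le_mul_of_nonneg_left hlog hs.le
  calc s * Real.log (∫ y, Real.exp (f y / s) ∂Q)
      ≤ s * (α * Real.log (∫ y, Real.exp (f y / μ₁) ∂Q)
          + β * Real.log (∫ y, Real.exp (f y / μ₂) ∂Q)) := this
    _ = a * (μ₁ * Real.log (∫ y, Real.exp (f y / μ₁) ∂Q))
        + b * (μ₂ * Real.log (∫ y, Real.exp (f y / μ₂) ∂Q)) := by
        rw [hα_def, hβ_def]
        field_simp

/-- Convexity of the Sinkhorn DRO dual objective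
`V_D(λ) = λρ + λε·log ∫ exp(f(y)/(λε)) dQ(y)` on `(0, ∞)`. -/
theorem sinkhorn_dual_convex {Y : Type*} [MeasurableSpace Y]
    (Q : Measure Y) [IsProbabilityMeasure Q]
    (f : Y → ℝ) (hf : Measurable f) (C : ℝ) (hfC : ∀ y, |f y| ≤ C)
    (ε ρ : ℝ) (hε : 0 < ε) (hρ : 0 ≤ ρ) :
    ConvexOn ℝ (Set.Ioi (0 : ℝ))
      (fun lam : ℝ =>
        lam * ρ + lam * ε * Real.log (∫ y, Real.exp (f y / (lam * ε)) ∂Q)) := by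
  refine ⟨convex_Ioi 0, fun x hx y hy a b ha hb hab => ?_⟩
  simp only [smul_eq_mul]
  rcases ha.eq_or_lt with rfl | ha'
  · simp only [zero_mul, zero_add] at hab ⊢
    subst hab
    simp only [one_mul]
    exact le_rfl
  rcases hb.eq_or_lt with rfl | hb'
  · simp only [zero_mul, add_zero] at hab ⊢
    subst hab
    simp only [one_mul]
    exact le_rfl
  have hx' : (0:ℝ) < x := hx
  have hy' : (0:ℝ) < y := hy
  have key := key_ineq Q f hf C hfC (mul_pos hx' hε) (mul_pos hy' hε) ha' hb' hab
  have h1 : (a * x + b * y) * ε = a * (x * ε) + b * (y * ε) := by ring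
  calc (a * x + b * y) * ρ
        + (a * x + b * y) * ε * Real.log (∫ y', Real.exp (f y' / ((a * x + b * y) * ε)) ∂Q)
      = (a * x + b * y) * ρ
        + (a * (x * ε) + b * (y * ε))
          * Real.log (∫ y', Real.exp (f y' / (a * (x * ε) + b * (y * ε))) ∂Q) := by
        rw [h1]
    _ ≤ (a * x + b * y) * ρ
        + (a * (x * ε * Real.log (∫ y', Real.exp (f y' / (x * ε)) ∂Q))
          + b * (y * ε * Real.log (∫ y', Real.exp (f y' / (y * ε)) ∂Q))) :=
        add_le_add_right key _
    _ = a * (x * ρ + x * ε * Real.log (∫ y', Real.exp (f y' / (x * ε)) ∂Q))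
        + b * (y * ρ + y * ε * Real.log (∫ y', Real.exp (f y' / (y * ε)) ∂Q)) := by ring
end

section
/- Let V_D(λ) := λρ + λε·log ∫_Y exp(f(y)/(λε)) dQ(y). If f is not Q-almost surely constant (i.e., there is no constant c₀ with f(y) = c₀ for Q-a.e. y), then V_D is strictly convex on (0, ∞). -/
open MeasureTheory

open Real in
lemma integrable_exp_mul {Y : Type*} [MeasurableSpace Y]
    (Q : Measure Y) [IsProbabilityMeasure Q]
    (f : Y → ℝ) (hf : Measurable f) (C : ℝ) (hfC : ∀ y, |f y| ≤ C) (t : ℝ) :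
    Integrable (fun y => Real.exp (t * f y)) Q := by
  refine (integrable_const (Real.exp (|t| * C))).mono'
    ((hf.const_mul t).exp.aestronglyMeasurable) (ae_of_all _ fun y => ?_)
  rw [Real.norm_eq_abs, abs_of_pos (Real.exp_pos _)]
  apply Real.exp_le_exp.2
  calc t * f y ≤ |t * f y| := le_abs_self _
    _ = |t| * |f y| := abs_mul _ _
    _ ≤ |t| * C := by
        have := (abs_nonneg (f y)).trans (hfC y)
        exact mul_le_mul_of_nonneg_left (hfC y) (abs_nonneg t)

lemma key_strict {Y : Type*} [MeasurableSpace Y]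
    (Q : Measure Y) [IsProbabilityMeasure Q]
    (f : Y → ℝ) (hf : Measurable f) (C : ℝ) (hfC : ∀ y, |f y| ≤ C)
    (hnc : ¬ ∃ c₀ : ℝ, ∀ᵐ y ∂Q, f y = c₀)
    {u v α β : ℝ} (huv : u ≠ v) (hα : 0 < α) (hβ : 0 < β) (hαβ : α + β = 1) :
    Real.log (∫ y, Real.exp ((α * u + β * v) * f y) ∂Q)
      < α * Real.log (∫ y, Real.exp (u * f y) ∂Q)
        + β * Real.log (∫ y, Real.exp (v * f y) ∂Q) := by
  have hint := integrable_exp_mul Q f hf C hfC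
  have hZpos : ∀ t : ℝ, 0 < ∫ y, Real.exp (t * f y) ∂Q :=
    fun t => integral_exp_pos (hint t)
  set μ' := Q.tilted (fun y => v * f y) with hμ'
  haveI : IsProbabilityMeasure μ' := isProbabilityMeasure_tilted (hint v)
  have hα1 : α < 1 := by linarith
  have hβ' : β = 1 - α := by linarith
  subst hβ'
  -- the function under Jensen
  set g : Y → ℝ := fun y => Real.exp ((u - v) * f y) with hg
  have hgint : Integrable g μ' := by
    refine (integrable_const (Real.exp (|u - v| * C))).mono'
      ((hf.const_mul (u - v)).exp.aestronglyMeasurable) (ae_of_all _ fun y => ?_)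
    rw [Real.norm_eq_abs, abs_of_pos (Real.exp_pos _)]
    apply Real.exp_le_exp.2
    calc (u - v) * f y ≤ |(u - v) * f y| := le_abs_self _
      _ = |u - v| * |f y| := abs_mul _ _
      _ ≤ |u - v| * C := mul_le_mul_of_nonneg_left (hfC y) (abs_nonneg _)
  have hgpow : ∀ y, g y ^ α = Real.exp (α * ((u - v) * f y)) := by
    intro y
    rw [hg, ← Real.exp_mul, mul_comm]
  have hgpowint : Integrable ((fun x : ℝ => x ^ α) ∘ g) μ' := by
    have : ((fun x : ℝ => x ^ α) ∘ g) = fun y => Real.exp ((α * (u - v)) * f y) := by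
      funext y; simp only [Function.comp_apply, hgpow y, mul_assoc]
    rw [this]
    refine (integrable_const (Real.exp (|α * (u - v)| * C))).mono'
      ((hf.const_mul _).exp.aestronglyMeasurable) (ae_of_all _ fun y => ?_)
    rw [Real.norm_eq_abs, abs_of_pos (Real.exp_pos _)]
    apply Real.exp_le_exp.2
    calc (α * (u - v)) * f y ≤ |(α * (u - v)) * f y| := le_abs_self _
      _ = |α * (u - v)| * |f y| := abs_mul _ _
      _ ≤ |α * (u - v)| * C := mul_le_mul_of_nonneg_left (hfC y) (abs_nonneg _)
  have hjensen := (Real.strictConcaveOn_rpow hα hα1).ae_eq_const_or_lt_map_average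
    (Real.continuous_rpow_const hα.le).continuousOn isClosed_Ici
    (ae_of_all _ fun y => Real.exp_nonneg _) hgint hgpowint
  rcases hjensen with hconst | hlt
  · -- constant case: contradiction
    exfalso
    have hac : Q ≪ μ' := absolutelyContinuous_tilted (hint v)
    have hconstQ : g =ᵐ[Q] Function.const Y (⨍ x, g x ∂μ') := hac.ae_le hconst
    refine hnc ⟨Real.log (⨍ x, g x ∂μ') / (u - v), ?_⟩
    filter_upwards [hconstQ] with y hy
    simp only [Function.const_apply, hg] at hy
    have h1 : (u - v) * f y = Real.log (⨍ x, g x ∂μ') := by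
      rw [← Real.log_exp ((u - v) * f y), hy]
    rw [eq_div_iff (sub_ne_zero.2 huv)]
    linarith [h1]
  · -- strict inequality case
    rw [average_eq_integral, average_eq_integral] at hlt
    have e1 : ∫ x, (fun x : ℝ => x ^ α) (g x) ∂μ'
        = (∫ y, Real.exp ((α * u + (1 - α) * v) * f y) ∂Q) / ∫ y, Real.exp (v * f y) ∂Q := by
      have : (fun x => (fun x : ℝ => x ^ α) (g x)) = fun y => Real.exp ((α * (u - v)) * f y) := by
        funext y; simp only [hgpow y, mul_assoc]
      rw [this]
      have h2 := integral_exp_tilted (μ := Q) (fun y => v * f y) (fun y => (α * (u - v)) * f y)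
      rw [h2]
      congr 1
      apply integral_congr_ae
      filter_upwards with y
      simp only [Pi.add_apply]
      ring_nf
    have e2 : ∫ x, g x ∂μ'
        = (∫ y, Real.exp (u * f y) ∂Q) / ∫ y, Real.exp (v * f y) ∂Q := by
      have h2 := integral_exp_tilted (μ := Q) (fun y => v * f y) (fun y => (u - v) * f y)
      rw [hg, h2]
      congr 1
      apply integral_congr_ae
      filter_upwards with y
      simp only [Pi.add_apply]
      ring_nf
    rw [e1, e2] at hlt
    have hlog := Real.log_lt_log (div_pos (hZpos _) (hZpos v)) hlt
    rw [Real.log_div (hZpos _).ne' (hZpos v).ne',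
      Real.log_rpow (div_pos (hZpos u) (hZpos v)),
      Real.log_div (hZpos u).ne' (hZpos v).ne'] at hlog
    nlinarith [hlog]

/-- Strict convexity of the Sinkhorn DRO dual objective on `(0, ∞)` when `f` is not
`Q`-almost surely constant. -/
theorem sinkhorn_dual_strictConvex {Y : Type*} [MeasurableSpace Y]
    (Q : Measure Y) [IsProbabilityMeasure Q]
    (f : Y → ℝ) (hf : Measurable f) (C : ℝ) (hfC : ∀ y, |f y| ≤ C)
    (ε ρ : ℝ) (hε : 0 < ε) (hρ : 0 ≤ ρ)
    (hnc : ¬ ∃ c₀ : ℝ, ∀ᵐ y ∂Q, f y = c₀) :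
    StrictConvexOn ℝ (Set.Ioi (0 : ℝ))
      (fun lam : ℝ =>
        lam * ρ + lam * ε * Real.log (∫ y, Real.exp (f y / (lam * ε)) ∂Q)) := by
  have hlin : ConvexOn ℝ (Set.Ioi (0 : ℝ)) (fun lam : ℝ => lam * ρ) := by
    refine ⟨convex_Ioi 0, fun x _ y _ a b _ _ _ => le_of_eq ?_⟩
    simp only [smul_eq_mul]; ring
  have hstrict : StrictConvexOn ℝ (Set.Ioi (0 : ℝ))
      (fun lam : ℝ => lam * ε * Real.log (∫ y, Real.exp (f y / (lam * ε)) ∂Q)) := by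
    refine ⟨convex_Ioi 0, fun x hx y hy hxy a b ha hb hab => ?_⟩
    simp only [smul_eq_mul, Set.mem_Ioi] at *
    have hx0 : 0 < x := hx
    have hy0 : 0 < y := hy
    have hlam : 0 < a * x + b * y := add_pos (mul_pos ha hx0) (mul_pos hb hy0)
    set lam := a * x + b * y with hlamdef
    set u : ℝ := (x * ε)⁻¹ with hu
    set v : ℝ := (y * ε)⁻¹ with hv
    have huv : u ≠ v := by
      intro h
      apply hxy
      have : x * ε = y * ε := by
        have := congrArg (fun t : ℝ => t⁻¹) h
        simpa [hu, hv, inv_inv] using this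
      exact mul_right_cancel₀ hε.ne' this
    set α : ℝ := a * x / lam with hαdef
    set β : ℝ := b * y / lam with hβdef
    have hα : 0 < α := div_pos (mul_pos ha hx0) hlam
    have hβ : 0 < β := div_pos (mul_pos hb hy0) hlam
    have hαβ : α + β = 1 := by
      rw [hαdef, hβdef, ← add_div, hlamdef, div_self hlam.ne']
    have key := key_strict Q f hf C hfC hnc huv hα hβ hαβ
    have hcomb : α * u + β * v = (lam * ε)⁻¹ := by
      have h1 : α * u = a / (lam * ε) := by
        rw [hαdef, hu]; field_simp
      have h2 : β * v = b / (lam * ε) := by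
        rw [hβdef, hv]; field_simp
      rw [h1, h2, ← add_div, hab, one_div]
    rw [hcomb] at key
    have hrw : ∀ t : ℝ, (∫ z, Real.exp (f z / t) ∂Q) = ∫ z, Real.exp (t⁻¹ * f z) ∂Q := by
      intro t; congr 1; funext z; rw [div_eq_inv_mul]
    have hrwu : (∫ z, Real.exp (f z / (x * ε)) ∂Q) = ∫ z, Real.exp (u * f z) ∂Q := by
      rw [hrw (x * ε), hu]
    have hrwv : (∫ z, Real.exp (f z / (y * ε)) ∂Q) = ∫ z, Real.exp (v * f z) ∂Q := by
      rw [hrw (y * ε), hv]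
    have hrwl : (∫ z, Real.exp (f z / (lam * ε)) ∂Q)
        = ∫ z, Real.exp ((lam * ε)⁻¹ * f z) ∂Q := hrw (lam * ε)
    rw [hrwu, hrwv, hrwl]
    have hmul := mul_lt_mul_of_pos_left key (mul_pos hlam hε)
    have h1 : lam * ε * α = a * x * ε := by
      rw [hαdef]; field_simp
    have h2 : lam * ε * β = b * y * ε := by
      rw [hβdef]; field_simp
    calc lam * ε * Real.log (∫ z, Real.exp ((lam * ε)⁻¹ * f z) ∂Q)
        < lam * ε * (α * Real.log (∫ z, Real.exp (u * f z) ∂Q)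
            + β * Real.log (∫ z, Real.exp (v * f z) ∂Q)) := hmul
      _ = a * (x * ε * Real.log (∫ z, Real.exp (u * f z) ∂Q))
            + b * (y * ε * Real.log (∫ z, Real.exp (v * f z) ∂Q)) := by
          rw [mul_add, ← mul_assoc, ← mul_assoc, h1, h2]; ring
  exact hlin.add_strictConvexOn hstrict
end

section
/- Let V_D(λ) := λρ + λε·log ∫_Y exp(f(y)/(λε)) dQ(y) and suppose ρ > 0. Extend V_D to λ = 0 by setting V_D(0) := Q-essential supremum of f, which equals the limit of V_D(λ) as λ → 0⁺. Then the extended function V_D attains its minimum over [0, ∞), and the minimizer λ★ ∈ [0, ∞) is unique. -/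
open MeasureTheory


open MeasureTheory Filter Set

set_option linter.unusedSectionVars false

namespace SinkhornAux

variable {Y : Type*} [MeasurableSpace Y]

noncomputable def J (Q : Measure Y) (f : Y → ℝ) (t : ℝ) : ℝ := ∫ y, Real.exp (t * f y) ∂Q

variable {Q : Measure Y} [IsProbabilityMeasure Q] {f : Y → ℝ} {C : ℝ}

theorem integrable_exp_mul (hf : Measurable f) (hfC : ∀ y, |f y| ≤ C) (t : ℝ) :
    Integrable (fun y => Real.exp (t * f y)) Q := by
  refine (integrable_const (Real.exp (|t| * C))).mono'
    ((hf.const_mul t).exp).aestronglyMeasurable (ae_of_all _ fun y => ?_)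
  rw [Real.norm_eq_abs, abs_of_pos (Real.exp_pos _)]
  refine Real.exp_le_exp.2 (le_trans (le_abs_self _) ?_)
  rw [abs_mul]
  exact mul_le_mul_of_nonneg_left (hfC y) (abs_nonneg t)

theorem J_pos (hf : Measurable f) (hfC : ∀ y, |f y| ≤ C) (t : ℝ) : 0 < J Q f t := by
  have h1 : Real.exp (-(|t| * C)) ≤ J Q f t := by
    have : Real.exp (-(|t| * C)) = ∫ _ : Y, Real.exp (-(|t| * C)) ∂Q := by simp
    rw [this]
    refine integral_mono (integrable_const _) (integrable_exp_mul hf hfC t) fun y => ?_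
    refine Real.exp_le_exp.2 (le_trans (neg_le_neg ?_) (neg_abs_le _))
    rw [abs_mul]
    exact mul_le_mul_of_nonneg_left (hfC y) (abs_nonneg t)
  linarith [Real.exp_pos (-(|t| * C))]

theorem bddU (hfC : ∀ y, |f y| ≤ C) : IsBoundedUnder (· ≤ ·) (ae Q) f :=
  ⟨C, eventually_map.2 (ae_of_all _ fun y => (abs_le.1 (hfC y)).2)⟩

theorem cobddU (hfC : ∀ y, |f y| ≤ C) : IsCoboundedUnder (· ≤ ·) (ae Q) f := by
  haveI : NeBot (ae Q) := ae_neBot.2 (IsProbabilityMeasure.ne_zero Q)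
  exact isCoboundedUnder_le_of_le _ fun y => (abs_le.1 (hfC y)).1

theorem ae_le_M (hfC : ∀ y, |f y| ≤ C) : ∀ᵐ y ∂Q, f y ≤ essSup f Q :=
  ae_le_essSup (bddU hfC)

theorem M_le_C (hfC : ∀ y, |f y| ≤ C) : essSup f Q ≤ C :=
  limsup_le_of_le (cobddU hfC) (eventually_map.2 (ae_of_all _ fun y => (abs_le.1 (hfC y)).2))

theorem neg_C_le_M (hfC : ∀ y, |f y| ≤ C) : -C ≤ essSup f Q := by
  haveI : NeBot (ae Q) := ae_neBot.2 (IsProbabilityMeasure.ne_zero Q)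
  exact le_limsup_of_frequently_le
    (Eventually.frequently (eventually_map.2 (ae_of_all _ fun y => (abs_le.1 (hfC y)).1)))
    (bddU hfC)

theorem meas_gt_pos (hfC : ∀ y, |f y| ≤ C) {δ : ℝ} (hδ : 0 < δ) :
    0 < (Q {y | essSup f Q - δ < f y}).toReal := by
  refine ENNReal.toReal_pos ?_ (measure_ne_top _ _)
  intro h0
  have hae : ∀ᵐ y ∂Q, f y ≤ essSup f Q - δ := by
    rw [ae_iff]
    convert h0 using 2
    ext y
    simp [not_le]
  have : essSup f Q ≤ essSup f Q - δ :=
    limsup_le_of_le (cobddU hfC) hae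
  linarith


theorem logJ_convex (hf : Measurable f) (hfC : ∀ y, |f y| ≤ C) {a b w1 w2 : ℝ}
    (hw1 : 0 ≤ w1) (hw2 : 0 ≤ w2) (hw : w1 + w2 = 1) :
    Real.log (J Q f (w1*a + w2*b)) ≤ w1 * Real.log (J Q f a) + w2 * Real.log (J Q f b) := by
  have hA : 0 < J Q f a := J_pos hf hfC a
  have hB : 0 < J Q f b := J_pos hf hfC b
  set A := J Q f a
  set B := J Q f b
  have hc : 0 < A ^ w1 * B ^ w2 := by positivity
  have key : ∀ y, Real.exp ((w1*a + w2*b) * f y) * (A ^ w1 * B ^ w2)⁻¹ ≤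
      w1 * (Real.exp (a * f y) / A) + w2 * (Real.exp (b * f y) / B) := by
    intro y
    have h1 : (Real.exp (a*f y)/A) ^ w1 * (Real.exp (b*f y)/B) ^ w2
        = Real.exp ((w1*a + w2*b) * f y) * (A ^ w1 * B ^ w2)⁻¹ := by
      rw [Real.div_rpow (Real.exp_nonneg _) hA.le, Real.div_rpow (Real.exp_nonneg _) hB.le,
        Real.rpow_def_of_pos (Real.exp_pos _), Real.rpow_def_of_pos (Real.exp_pos _),
        Real.log_exp, Real.log_exp, div_mul_div_comm, ← Real.exp_add]
      have : a * f y * w1 + b * f y * w2 = (w1*a + w2*b) * f y := by ring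
      rw [this, div_eq_mul_inv]
    rw [← h1]
    exact Real.geom_mean_le_arith_mean2_weighted hw1 hw2
      (div_nonneg (Real.exp_nonneg _) hA.le) (div_nonneg (Real.exp_nonneg _) hB.le) hw
  have hIa := integrable_exp_mul (Q := Q) hf hfC a
  have hIb := integrable_exp_mul (Q := Q) hf hfC b
  have hint := integral_mono ((integrable_exp_mul hf hfC (w1*a + w2*b)).mul_const _)
    (((hIa.div_const A).const_mul w1).add ((hIb.div_const B).const_mul w2)) key
  have hAeq : (∫ y, Real.exp (a * f y) ∂Q) = A := rfl
  have hBeq : (∫ y, Real.exp (b * f y) ∂Q) = B := rfl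
  have hL : ∫ y, Real.exp ((w1*a + w2*b) * f y) * (A ^ w1 * B ^ w2)⁻¹ ∂Q
      = J Q f (w1*a + w2*b) * (A ^ w1 * B ^ w2)⁻¹ := integral_mul_const _ _
  have hR : ∫ y, (w1 * (Real.exp (a * f y) / A) + w2 * (Real.exp (b * f y) / B)) ∂Q = 1 := by
    rw [integral_add ((hIa.div_const A).const_mul w1) ((hIb.div_const B).const_mul w2),
      integral_const_mul, integral_const_mul, integral_div, integral_div, hAeq, hBeq,
      div_self hA.ne', div_self hB.ne', mul_one, mul_one, hw]
  simp only [Pi.add_apply] at hint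
  rw [hL, hR] at hint
  have h2 : J Q f (w1*a + w2*b) ≤ A ^ w1 * B ^ w2 := by
    have h3 := mul_le_mul_of_nonneg_right hint hc.le
    rw [one_mul, mul_assoc, inv_mul_cancel₀ hc.ne', mul_one] at h3
    exact h3
  calc Real.log (J Q f (w1*a + w2*b)) ≤ Real.log (A ^ w1 * B ^ w2) :=
        Real.log_le_log (J_pos hf hfC _) h2
    _ = w1 * Real.log A + w2 * Real.log B := by
        rw [Real.log_mul (Real.rpow_pos_of_pos hA _).ne' (Real.rpow_pos_of_pos hB _).ne',
          Real.log_rpow hA, Real.log_rpow hB]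


theorem logJ_strict (hf : Measurable f) (hfC : ∀ y, |f y| ≤ C)
    (hnc : ∀ c : ℝ, ¬ f =ᵐ[Q] fun _ => c) {s1 s2 : ℝ} (hne : s1 ≠ s2) :
    Real.log (J Q f ((s1+s2)/2)) < (Real.log (J Q f s1) + Real.log (J Q f s2))/2 := by
  have hJ1 : 0 < J Q f s1 := J_pos hf hfC s1
  have hJ2 : 0 < J Q f s2 := J_pos hf hfC s2
  set a := Real.sqrt (J Q f s2) with hadef
  set b := Real.sqrt (J Q f s1) with hbdef
  have ha : 0 < a := Real.sqrt_pos.2 hJ2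
  have hb : 0 < b := Real.sqrt_pos.2 hJ1
  set u : Y → ℝ := fun y => a * Real.exp (s1 * f y / 2) - b * Real.exp (s2 * f y / 2) with hu
  have husq : ∀ y, u y ^ 2 = a^2 * Real.exp (s1 * f y) - 2*a*b*Real.exp (((s1+s2)/2) * f y)
      + b^2 * Real.exp (s2 * f y) := by
    intro y
    have E1 : Real.exp (s1*f y/2) * Real.exp (s1*f y/2) = Real.exp (s1*f y) := by
      rw [← Real.exp_add]; congr 1; ring
    have E2 : Real.exp (s2*f y/2) * Real.exp (s2*f y/2) = Real.exp (s2*f y) := by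
      rw [← Real.exp_add]; congr 1; ring
    have E12 : Real.exp (s1*f y/2) * Real.exp (s2*f y/2) = Real.exp (((s1+s2)/2)*f y) := by
      rw [← Real.exp_add]; congr 1; ring
    simp only [hu]
    linear_combination a^2*E1 + b^2*E2 - 2*a*b*E12
  have hint_u2 : Integrable (fun y => u y ^ 2) Q := by
    have heq : (fun y => u y ^ 2) = fun y => a^2 * Real.exp (s1 * f y)
        - 2*a*b*Real.exp (((s1+s2)/2) * f y) + b^2 * Real.exp (s2 * f y) := funext husq
    rw [heq]
    exact (((integrable_exp_mul hf hfC s1).const_mul _).sub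
      ((integrable_exp_mul hf hfC _).const_mul _)).add
      ((integrable_exp_mul hf hfC s2).const_mul _)
  have hI : ∫ y, u y ^ 2 ∂Q = a^2 * J Q f s1 - 2*a*b*J Q f ((s1+s2)/2) + b^2 * J Q f s2 := by
    simp only [husq]
    have i1 : Integrable (fun y => a^2 * Real.exp (s1 * f y)) Q :=
      (integrable_exp_mul hf hfC s1).const_mul _
    have i2 : Integrable (fun y => 2*a*b * Real.exp (((s1+s2)/2) * f y)) Q :=
      (integrable_exp_mul hf hfC _).const_mul _
    have i3 : Integrable (fun y => b^2 * Real.exp (s2 * f y)) Q :=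
      (integrable_exp_mul hf hfC s2).const_mul _
    have i12 : Integrable (fun y => a^2 * Real.exp (s1 * f y)
        - 2*a*b * Real.exp (((s1+s2)/2) * f y)) Q := i1.sub i2
    rw [integral_add i12 i3, integral_sub i1 i2,
      integral_const_mul, integral_const_mul, integral_const_mul]
    rfl
  have hpos : 0 < ∫ y, u y ^ 2 ∂Q := by
    rcases (integral_nonneg (f := fun y => u y ^ 2) fun y => sq_nonneg (u y)).lt_or_eq with h | h
    · exact h
    · exfalso
      have hz : (fun y => u y ^ 2) =ᵐ[Q] 0 :=
        (integral_eq_zero_iff_of_nonneg (fun y => sq_nonneg (u y)) hint_u2).1 h.symm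
      have hs : s1 - s2 ≠ 0 := sub_ne_zero.2 hne
      refine hnc (2*(Real.log b - Real.log a)/(s1 - s2)) (hz.mono fun y hy => ?_)
      have hy0 : u y = 0 := by
        have : u y ^ 2 = 0 := hy
        exact pow_eq_zero_iff (n := 2) (by norm_num) |>.1 this
      have heq : a * Real.exp (s1 * f y / 2) = b * Real.exp (s2 * f y / 2) :=
        sub_eq_zero.1 hy0
      have hlog := congrArg Real.log heq
      rw [Real.log_mul ha.ne' (Real.exp_pos _).ne', Real.log_mul hb.ne' (Real.exp_pos _).ne',
        Real.log_exp, Real.log_exp] at hlog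
      show f y = 2*(Real.log b - Real.log a)/(s1 - s2)
      field_simp
      linarith
  have ha2 : a^2 = J Q f s2 := Real.sq_sqrt hJ2.le
  have hb2 : b^2 = J Q f s1 := Real.sq_sqrt hJ1.le
  have hab : 0 < a*b := mul_pos ha hb
  have hJm_lt : J Q f ((s1+s2)/2) < a*b := by
    rw [hI] at hpos
    have h2 : 2*(a*b)*J Q f ((s1+s2)/2) < 2*(a*b)*(a*b) := by nlinarith [hpos]
    exact (mul_lt_mul_iff_right₀ (by positivity)).1 h2
  calc Real.log (J Q f ((s1+s2)/2)) < Real.log (a*b) :=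
        Real.log_lt_log (J_pos hf hfC _) hJm_lt
    _ = (Real.log (J Q f s1) + Real.log (J Q f s2))/2 := by
        rw [Real.log_mul ha.ne' hb.ne', hadef, hbdef, Real.log_sqrt hJ2.le,
          Real.log_sqrt hJ1.le]
        ring


theorem tendsto_VD (hf : Measurable f) (hfC : ∀ y, |f y| ≤ C) {ε ρ : ℝ}
    (hε : 0 < ε) (hρ : 0 < ρ) {VD : ℝ → ℝ}
    (hVDJ : ∀ lam : ℝ, VD lam = lam * ρ + lam * ε * Real.log (J Q f (1/(lam*ε)))) :
    Filter.Tendsto VD (nhdsWithin 0 (Set.Ioi (0:ℝ))) (nhds (essSup f Q)) := by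
  set M := essSup f Q with hM
  rw [tendsto_order]
  constructor
  · intro x hx
    set δ := (M - x)/2 with hδdef
    have hδ : 0 < δ := by simp only [hδdef]; linarith
    set S := {y | M - δ < f y} with hS
    have hSmeas : MeasurableSet S := measurableSet_lt measurable_const hf
    set q := (Q S).toReal with hq
    have hq0 : 0 < q := meas_gt_pos hfC hδ
    have hr : 0 < δ/(2*ε*(|Real.log q| + 1)) := by positivity
    filter_upwards [Ioo_mem_nhdsGT_of_mem (Set.left_mem_Ico.2 hr)] with lam hlam
    obtain ⟨hl0, hlr⟩ := hlam
    have hle : 0 < lam * ε := by positivity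
    set t := 1/(lam*ε) with ht
    have ht0 : 0 < t := by positivity
    have hJt : Real.exp (t*(M-δ)) * q ≤ J Q f t := by
      have hind : ∀ y, S.indicator (fun _ => Real.exp (t*(M-δ))) y ≤ Real.exp (t * f y) := by
        intro y
        by_cases hy : y ∈ S
        · rw [Set.indicator_of_mem hy]
          exact Real.exp_le_exp.2 (mul_le_mul_of_nonneg_left (le_of_lt hy) ht0.le)
        · rw [Set.indicator_of_notMem hy]
          exact (Real.exp_pos _).le
      have h2 := integral_mono ((integrable_const (μ := Q) _).indicator hSmeas)
        (integrable_exp_mul hf hfC t) hind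
      rwa [integral_indicator_const _ hSmeas, smul_eq_mul, mul_comm] at h2
    have hlogJ : t*(M-δ) + Real.log q ≤ Real.log (J Q f t) := by
      have h1 : (0:ℝ) < Real.exp (t*(M-δ)) * q := by positivity
      calc t*(M-δ) + Real.log q = Real.log (Real.exp (t*(M-δ)) * q) := by
            rw [Real.log_mul (Real.exp_pos _).ne' hq0.ne', Real.log_exp]
        _ ≤ Real.log (J Q f t) := Real.log_le_log h1 hJt
    have hmul : M - δ + lam*ε*Real.log q ≤ lam*ε*Real.log (J Q f t) := by
      have h3 := mul_le_mul_of_nonneg_left hlogJ hle.le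
      have hte : lam*ε*t = 1 := by
        rw [ht, mul_one_div, div_self hle.ne']
      have h4 : lam*ε*(t*(M-δ)) = M - δ := by rw [← mul_assoc, hte, one_mul]
      calc M - δ + lam*ε*Real.log q = lam*ε*(t*(M-δ) + Real.log q) := by rw [mul_add, h4]
        _ ≤ _ := h3
    have hlq : -(δ/2) ≤ lam*ε*Real.log q := by
      have h1 : lam*ε*|Real.log q| ≤ δ/2 := by
        have h5 : lam*(2*ε*(|Real.log q| + 1)) < δ := by
          rw [← lt_div_iff₀ (by positivity)]
          exact hlr
        nlinarith [abs_nonneg (Real.log q), hle.le]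
      have h2 : -(lam*ε*|Real.log q|) ≤ lam*ε*Real.log q := by
        nlinarith [neg_abs_le (Real.log q), hle.le]
      linarith
    rw [hVDJ lam, ← ht]
    have hlρ : 0 < lam * ρ := mul_pos hl0 hρ
    have hxeq : x = M - 2*δ := by rw [hδdef]; ring
    linarith
  · intro x hx
    have hrx : 0 < (x - M)/ρ := div_pos (by linarith) hρ
    filter_upwards [Ioo_mem_nhdsGT_of_mem (Set.left_mem_Ico.2 hrx)] with lam hlam
    obtain ⟨hl0, hlr⟩ := hlam
    have hle : 0 < lam*ε := by positivity
    have ht0 : 0 < 1/(lam*ε) := by positivity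
    have hJle : J Q f (1/(lam*ε)) ≤ Real.exp ((1/(lam*ε)) * M) := by
      have h2 := integral_mono_ae (integrable_exp_mul hf hfC _) (integrable_const _)
        ((ae_le_M (Q := Q) hfC).mono fun y hy =>
          Real.exp_le_exp.2 (mul_le_mul_of_nonneg_left hy ht0.le))
      simpa [J, hM] using h2
    have hlog : lam*ε*Real.log (J Q f (1/(lam*ε))) ≤ M := by
      have h1 : Real.log (J Q f (1/(lam*ε))) ≤ (1/(lam*ε))*M :=
        (Real.log_le_log (J_pos hf hfC _) hJle).trans_eq (Real.log_exp _)
      have h2 := mul_le_mul_of_nonneg_left h1 hle.le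
      rwa [← mul_assoc, mul_one_div, div_self hle.ne', one_mul] at h2
    rw [hVDJ lam]
    have h6 : lam*ρ < x - M := by
      calc lam*ρ < ((x-M)/ρ)*ρ := (mul_lt_mul_iff_left₀ hρ).2 hlr
        _ = x - M := div_mul_cancel₀ _ hρ.ne'
    linarith


theorem VD_convex (hf : Measurable f) (hfC : ∀ y, |f y| ≤ C) {ε ρ : ℝ} (hε : 0 < ε)
    {VD : ℝ → ℝ}
    (hVDJ : ∀ lam : ℝ, VD lam = lam * ρ + lam * ε * Real.log (J Q f (1/(lam*ε))))
    {l1 l2 θ : ℝ} (h1 : 0 < l1) (h2 : 0 < l2) (hθ0 : 0 < θ) (hθ1 : θ < 1) :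
    VD (θ*l1 + (1-θ)*l2) ≤ θ * VD l1 + (1-θ) * VD l2 := by
  set lam := θ*l1 + (1-θ)*l2 with hlam
  have hl : 0 < lam := by nlinarith
  set s1 := 1/(l1*ε) with hs1
  set s2 := 1/(l2*ε) with hs2
  set w1 := θ*l1/lam with hw1d
  set w2 := (1-θ)*l2/lam with hw2d
  have hw1 : 0 ≤ w1 := by
    rw [hw1d]; exact le_of_lt (div_pos (mul_pos hθ0 h1) hl)
  have hw2 : 0 ≤ w2 := by
    rw [hw2d]; exact le_of_lt (div_pos (mul_pos (by linarith) h2) hl)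
  have hw : w1 + w2 = 1 := by
    rw [hw1d, hw2d, ← add_div, ← hlam, div_self hl.ne']
  have hs : 1/(lam*ε) = w1*s1 + w2*s2 := by
    rw [hw1d, hw2d, hs1, hs2, hlam]
    field_simp
    ring
  have hK := logJ_convex (Q := Q) (a := s1) (b := s2) hf hfC hw1 hw2 hw
  rw [hVDJ, hVDJ, hVDJ, hs, ← hs1, ← hs2]
  have hmul := mul_le_mul_of_nonneg_left hK (le_of_lt (show (0:ℝ) < lam*ε by positivity))
  have e1 : lam*ε*(w1 * Real.log (J Q f s1) + w2 * Real.log (J Q f s2))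
      = θ*(l1*ε*Real.log (J Q f s1)) + (1-θ)*(l2*ε*Real.log (J Q f s2)) := by
    rw [hw1d, hw2d]
    field_simp
  have e2 : lam*ρ = θ*(l1*ρ) + (1-θ)*(l2*ρ) := by rw [hlam]; ring
  have e3 : θ * (l1 * ρ + l1 * ε * Real.log (J Q f s1))
      + (1-θ) * (l2 * ρ + l2 * ε * Real.log (J Q f s2))
      = (θ*(l1*ρ) + (1-θ)*(l2*ρ)) + (θ*(l1*ε*Real.log (J Q f s1))
        + (1-θ)*(l2*ε*Real.log (J Q f s2))) := by ring
  linarith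

theorem VD_harm_strict (hf : Measurable f) (hfC : ∀ y, |f y| ≤ C)
    (hnc : ∀ c : ℝ, ¬ f =ᵐ[Q] fun _ => c) {ε ρ : ℝ} (hε : 0 < ε) {VD : ℝ → ℝ}
    (hVDJ : ∀ lam : ℝ, VD lam = lam * ρ + lam * ε * Real.log (J Q f (1/(lam*ε))))
    {p1 p2 : ℝ} (h1 : 0 < p1) (h12 : p1 < p2) :
    VD (2*p1*p2/(p1+p2)) < (p2/(p1+p2))*VD p1 + (p1/(p1+p2))*VD p2 := by
  have h2 : 0 < p2 := h1.trans h12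
  have hsum : 0 < p1 + p2 := by linarith
  set h := 2*p1*p2/(p1+p2) with hh
  have hh0 : 0 < h := by positivity
  set s1 := 1/(p1*ε) with hs1
  set s2 := 1/(p2*ε) with hs2
  have hs12 : s1 ≠ s2 := by
    have : s2 < s1 := by
      rw [hs1, hs2]
      exact one_div_lt_one_div_of_lt (by positivity) (by nlinarith)
    exact this.ne'
  have hsm : 1/(h*ε) = (s1 + s2)/2 := by
    rw [hh, hs1, hs2]
    field_simp
    ring
  have hK := logJ_strict (Q := Q) hf hfC hnc hs12
  rw [hVDJ, hVDJ, hVDJ, hsm, ← hs1, ← hs2]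
  have hcoef : (0:ℝ) < h*ε := by positivity
  have hmul := (mul_lt_mul_iff_right₀ hcoef).2 hK
  have e : h*ε*((Real.log (J Q f s1) + Real.log (J Q f s2))/2)
      = (p2/(p1+p2))*(p1*ε*Real.log (J Q f s1)) + (p1/(p1+p2))*(p2*ε*Real.log (J Q f s2)) := by
    rw [hh]
    field_simp
  have eρ : h*ρ = (p2/(p1+p2))*(p1*ρ) + (p1/(p1+p2))*(p2*ρ) := by
    rw [hh]; field_simp; ring
  have e3 : (p2/(p1+p2))*(p1*ρ + p1*ε*Real.log (J Q f s1))
      + (p1/(p1+p2))*(p2*ρ + p2*ε*Real.log (J Q f s2))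
      = ((p2/(p1+p2))*(p1*ρ) + (p1/(p1+p2))*(p2*ρ))
        + ((p2/(p1+p2))*(p1*ε*Real.log (J Q f s1))
          + (p1/(p1+p2))*(p2*ε*Real.log (J Q f s2))) := by ring
  linarith

theorem VD_lb (hf : Measurable f) (hfC : ∀ y, |f y| ≤ C) {ε ρ : ℝ} (hε : 0 < ε)
    {VD : ℝ → ℝ}
    (hVDJ : ∀ lam : ℝ, VD lam = lam * ρ + lam * ε * Real.log (J Q f (1/(lam*ε))))
    {lam : ℝ} (hl : 0 < lam) : lam*ρ - C ≤ VD lam := by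
  have hle : 0 < lam*ε := by positivity
  have ht0 : 0 < 1/(lam*ε) := by positivity
  have hJge : Real.exp ((1/(lam*ε)) * (-C)) ≤ J Q f (1/(lam*ε)) := by
    have h2 := integral_mono (integrable_const (μ := Q) _) (integrable_exp_mul hf hfC _)
      (fun y => Real.exp_le_exp.2 (mul_le_mul_of_nonneg_left ((abs_le.1 (hfC y)).1) ht0.le))
    simpa [J] using h2
  have hlog : (1/(lam*ε)) * (-C) ≤ Real.log (J Q f (1/(lam*ε))) := by
    have := Real.log_le_log (Real.exp_pos _) hJge
    rwa [Real.log_exp] at this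
  have h3 := mul_le_mul_of_nonneg_left hlog hle.le
  rw [← mul_assoc, mul_one_div, div_self hle.ne', one_mul] at h3
  rw [hVDJ]
  linarith

theorem VD_of_const {c : ℝ} (hc : f =ᵐ[Q] fun _ => c) {ε ρ : ℝ} (hε : 0 < ε)
    {VD : ℝ → ℝ}
    (hVDJ : ∀ lam : ℝ, VD lam = lam * ρ + lam * ε * Real.log (J Q f (1/(lam*ε))))
    {lam : ℝ} (hl : 0 < lam) : VD lam = lam * ρ + c := by
  have hle : 0 < lam*ε := by positivity
  have hJ : J Q f (1/(lam*ε)) = Real.exp ((1/(lam*ε))*c) := by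
    calc J Q f (1/(lam*ε)) = ∫ _y, Real.exp ((1/(lam*ε))*c) ∂Q :=
          integral_congr_ae (hc.mono fun y hy => by dsimp only; rw [show f y = c from hy])
      _ = Real.exp ((1/(lam*ε))*c) := by simp
  rw [hVDJ, hJ, Real.log_exp, ← mul_assoc, mul_one_div, div_self hle.ne', one_mul]


theorem VD_contAt (hf : Measurable f) (hfC : ∀ y, |f y| ≤ C) {ε ρ : ℝ}
    (hε : 0 < ε) (hC : 0 ≤ C) {VD : ℝ → ℝ}
    (hVD : ∀ lam : ℝ,
      VD lam = lam * ρ + lam * ε * Real.log (∫ y, Real.exp (f y / (lam * ε)) ∂Q))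
    {l0 : ℝ} (h0 : 0 < l0) : ContinuousAt VD l0 := by
  have hVDf : VD = fun lam => lam * ρ
      + lam * ε * Real.log (∫ y, Real.exp (f y / (lam * ε)) ∂Q) := funext hVD
  rw [hVDf]
  have hI : ContinuousAt (fun lam => ∫ y, Real.exp (f y / (lam * ε)) ∂Q) l0 := by
    apply continuousAt_of_dominated (bound := fun _ => Real.exp (C / (l0/2 * ε)))
    · filter_upwards with lam
      exact ((hf.div_const (lam * ε)).exp).aestronglyMeasurable
    · filter_upwards [eventually_gt_nhds (show l0/2 < l0 by linarith)] with lam hlam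
      refine ae_of_all _ fun y => ?_
      rw [Real.norm_eq_abs, abs_of_pos (Real.exp_pos _)]
      apply Real.exp_le_exp.2
      have hl2 : 0 < l0/2 := by linarith
      have hl : 0 < lam := hl2.trans hlam
      calc f y / (lam*ε) ≤ C/(lam*ε) := by
            apply div_le_div_of_nonneg_right ?_ (by positivity)
            exact le_trans (le_abs_self _) (hfC y)
        _ ≤ C/(l0/2*ε) := by
            exact div_le_div_of_nonneg_left hC (by positivity)
              (mul_le_mul_of_nonneg_right hlam.le hε.le)
    · exact integrable_const _
    · refine ae_of_all _ fun y => ?_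
      have hcd : ContinuousAt (fun lam : ℝ => f y / (lam * ε)) l0 :=
        continuousAt_const.div (continuousAt_id.mul continuousAt_const)
          (mul_pos h0 hε).ne'
      exact Real.continuous_exp.continuousAt.comp hcd
  have hIpos : 0 < ∫ y, Real.exp (f y / (l0 * ε)) ∂Q := by
    have hp := J_pos (Q := Q) hf hfC (1/(l0*ε))
    simpa [J, one_div, div_eq_inv_mul] using hp
  have hlog : ContinuousAt (fun lam => Real.log (∫ y, Real.exp (f y / (lam * ε)) ∂Q)) l0 :=
    ContinuousAt.comp (g := Real.log) (f := fun lam => ∫ y, Real.exp (f y / (lam * ε)) ∂Q)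
      (Real.continuousAt_log hIpos.ne') hI
  exact (continuousAt_id.mul continuousAt_const).add
    ((continuousAt_id.mul continuousAt_const).mul hlog)


theorem no_two_min (hf : Measurable f) (hfC : ∀ y, |f y| ≤ C) {ε ρ : ℝ}
    (hε : 0 < ε) (hρ : 0 < ρ) {VD Vext : ℝ → ℝ}
    (hVDJ : ∀ lam : ℝ, VD lam = lam * ρ + lam * ε * Real.log (J Q f (1/(lam*ε))))
    (hVext : ∀ lam : ℝ, Vext lam = if lam = 0 then essSup f Q else VD lam)
    (htend : Filter.Tendsto VD (nhdsWithin 0 (Set.Ioi (0:ℝ))) (nhds (essSup f Q)))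
    {a b : ℝ} (ha : 0 ≤ a) (hab : a < b)
    (hamin : ∀ lam ∈ Set.Ici (0:ℝ), Vext a ≤ Vext lam)
    (hbmin : ∀ lam ∈ Set.Ici (0:ℝ), Vext b ≤ Vext lam) : False := by
  have hb0 : 0 < b := lt_of_le_of_lt ha hab
  set M := essSup f Q with hMdef
  have hVextpos : ∀ {lam : ℝ}, 0 < lam → Vext lam = VD lam := fun {lam} h => by
    rw [hVext, if_neg h.ne']
  have hm : Vext a = Vext b := le_antisymm (hamin b (le_of_lt hb0)) (hbmin a ha)
  set m := Vext a with hmdef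
  by_cases hcst : ∃ c, f =ᵐ[Q] fun _ => c
  · obtain ⟨c, hc⟩ := hcst
    have hva : Vext a = a*ρ + c := by
      rcases eq_or_lt_of_le ha with h0 | h0
      · rw [← h0, hVext, if_pos rfl]
        have hMc : M = c := by
          rw [hMdef, essSup_congr_ae hc]
          exact essSup_const c (IsProbabilityMeasure.ne_zero Q)
        rw [hMc]; ring
      · rw [hVextpos h0]
        exact VD_of_const hc hε hVDJ h0
    have hvb : Vext b = b*ρ + c := by
      rw [hVextpos hb0]
      exact VD_of_const hc hε hVDJ hb0
    have hba : Vext b ≤ Vext a := hbmin a ha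
    rw [hva, hvb] at hba
    nlinarith
  · push_neg at hcst
    have hge : ∀ lam : ℝ, 0 < lam → m ≤ VD lam := by
      intro lam h
      rw [← hVextpos h]
      exact hamin lam h.le
    have heq : ∀ lam, a < lam → lam < b → VD lam = m := by
      intro lam hal hlb
      have hlam0 : 0 < lam := lt_of_le_of_lt ha hal
      refine le_antisymm ?_ (hge lam hlam0)
      rcases eq_or_lt_of_le ha with h0 | h0
      · -- a = 0 : limit argument
        have hMm : M = m := by rw [hmdef, ← h0, hVext, if_pos rfl]
        have hvbm : VD b = m := by rw [← hVextpos hb0, ← hm]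
        have hθc : ContinuousAt (fun δ : ℝ => (b-lam)/(b-δ)) 0 :=
          continuousAt_const.div (continuousAt_const.sub continuousAt_id)
            (by simpa using hb0.ne')
        have hθ : Filter.Tendsto (fun δ : ℝ => (b-lam)/(b-δ)) (nhdsWithin 0 (Set.Ioi 0))
            (nhds ((b-lam)/b)) := by
          have h2 := hθc.tendsto.mono_left (nhdsWithin_le_nhds (s := Set.Ioi (0:ℝ)))
          simpa using h2
        have hFtend : Filter.Tendsto
            (fun δ => ((b-lam)/(b-δ)) * VD δ + (1-(b-lam)/(b-δ)) * VD b)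
            (nhdsWithin 0 (Set.Ioi 0)) (nhds (((b-lam)/b) * M + (1-(b-lam)/b) * VD b)) :=
          (hθ.mul htend).add ((tendsto_const_nhds.sub hθ).mul tendsto_const_nhds)
        have hev : ∀ᶠ δ in nhdsWithin 0 (Set.Ioi (0:ℝ)),
            VD lam ≤ ((b-lam)/(b-δ)) * VD δ + (1-(b-lam)/(b-δ)) * VD b := by
          filter_upwards [Ioo_mem_nhdsGT_of_mem (Set.left_mem_Ico.2 hlam0)] with δ hδ
          obtain ⟨hδ0, hδlam⟩ := hδ
          have hθδ0 : 0 < (b-lam)/(b-δ) := div_pos (by linarith) (by linarith)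
          have hθδ1 : (b-lam)/(b-δ) < 1 := (div_lt_one (by linarith)).2 (by linarith)
          have hcomb : ((b-lam)/(b-δ))*δ + (1-(b-lam)/(b-δ))*b = lam := by
            have hbδ : b - δ ≠ 0 := ne_of_gt (by linarith)
            field_simp [hbδ]
            ring
          have h5 := VD_convex hf hfC hε hVDJ hδ0 hb0 hθδ0 hθδ1
          rwa [hcomb] at h5
        have hle := ge_of_tendsto hFtend hev
        rw [hvbm, hMm] at hle
        have hres : ((b-lam)/b)*m + (1-(b-lam)/b)*m = m := by ring
        linarith
      · -- 0 < a
        have hvam : VD a = m := by rw [← hVextpos h0]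
        have hvbm : VD b = m := by rw [← hVextpos hb0, ← hm]
        set θ := (b - lam)/(b - a) with hθdef
        have hθ0 : 0 < θ := div_pos (by linarith) (by linarith)
        have hθ1 : θ < 1 := (div_lt_one (by linarith)).2 (by linarith)
        have hcomb : θ*a + (1-θ)*b = lam := by
          rw [hθdef]
          have hba : b - a ≠ 0 := ne_of_gt (by linarith)
          field_simp [hba]
          ring
        have h5 := VD_convex hf hfC hε hVDJ h0 hb0 hθ0 hθ1
        rw [hcomb, hvam, hvbm] at h5
        calc VD lam ≤ θ*m + (1-θ)*m := h5
          _ = m := by ring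
    set p1 := a + (b-a)/4 with hp1
    set p2 := a + (b-a)/2 with hp2
    have hp10 : 0 < p1 := by rw [hp1]; linarith
    have hp12 : p1 < p2 := by rw [hp1, hp2]; linarith
    have hsum : 0 < p1 + p2 := by rw [hp1, hp2]; linarith
    have hstrict := VD_harm_strict hf hfC hcst hε hVDJ hp10 hp12
    have hp20 : 0 < p2 := hp10.trans hp12
    have hm1 : p1 < 2*p1*p2/(p1+p2) := by
      rw [lt_div_iff₀ hsum]
      nlinarith
    have hm2 : 2*p1*p2/(p1+p2) < p2 := by
      rw [div_lt_iff₀ hsum]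
      nlinarith
    have e1 : VD p1 = m := heq p1 (by rw [hp1]; linarith) (by rw [hp1]; linarith)
    have e2 : VD p2 = m := heq p2 (by rw [hp2]; linarith) (by rw [hp2]; linarith)
    have e3 : VD (2*p1*p2/(p1+p2)) = m := by
      refine heq _ ?_ ?_
      · calc a < p1 := by rw [hp1]; linarith
          _ < _ := hm1
      · calc 2*p1*p2/(p1+p2) < p2 := hm2
          _ < b := by rw [hp2]; linarith
    rw [e1, e2, e3] at hstrict
    have hws : p2/(p1+p2)*m + p1/(p1+p2)*m = m := by
      field_simp
      ring
    linarith

end SinkhornAux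


open SinkhornAux

/-- For `ρ > 0`, extending `V_D` to `λ = 0` by the `Q`-essential supremum of `f`
(which is the right limit of `V_D` at `0`), the extended function attains its minimum
over `[0, ∞)` at a unique point. -/
theorem sinkhorn_dual_unique_minimizer {Y : Type*} [MeasurableSpace Y]
    (Q : Measure Y) [IsProbabilityMeasure Q]
    (f : Y → ℝ) (hf : Measurable f) (C : ℝ) (hfC : ∀ y, |f y| ≤ C)
    (ε ρ : ℝ) (hε : 0 < ε) (hρ : 0 < ρ)
    (VD Vext : ℝ → ℝ)
    (hVD : ∀ lam : ℝ,
      VD lam = lam * ρ + lam * ε * Real.log (∫ y, Real.exp (f y / (lam * ε)) ∂Q))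
    (hVext : ∀ lam : ℝ, Vext lam = if lam = 0 then essSup f Q else VD lam) :
    Filter.Tendsto VD (nhdsWithin 0 (Set.Ioi (0 : ℝ))) (nhds (essSup f Q)) ∧
    ∃! lstar : ℝ, lstar ∈ Set.Ici (0 : ℝ) ∧
      ∀ lam ∈ Set.Ici (0 : ℝ), Vext lstar ≤ Vext lam := by
  classical
  have hYne : Nonempty Y := by
    by_contra h
    rw [not_nonempty_iff] at h
    have h1 : Q Set.univ = 1 := measure_univ
    rw [Set.univ_eq_empty_iff.2 h, measure_empty] at h1
    norm_num at h1
  have hC : 0 ≤ C := le_trans (abs_nonneg _) (hfC (Classical.choice hYne))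
  have hVDJ : ∀ lam : ℝ, VD lam = lam * ρ + lam * ε * Real.log (J Q f (1/(lam*ε))) := by
    intro lam
    rw [hVD lam]
    have hint : (∫ y, Real.exp (f y / (lam * ε)) ∂Q) = J Q f (1/(lam*ε)) := by
      apply integral_congr_ae
      refine Filter.Eventually.of_forall fun y => ?_
      dsimp only
      rw [one_div, inv_mul_eq_div]
    rw [hint]
  have htend : Filter.Tendsto VD (nhdsWithin 0 (Set.Ioi (0:ℝ))) (nhds (essSup f Q)) :=
    tendsto_VD hf hfC hε hρ hVDJ
  refine ⟨htend, ?_⟩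
  set M := essSup f Q with hM
  have hVext0 : Vext 0 = M := by rw [hVext 0, if_pos rfl]
  have hVextpos : ∀ {lam : ℝ}, 0 < lam → Vext lam = VD lam := fun {lam} h => by
    rw [hVext, if_neg h.ne']
  have hMC : M ≤ C := M_le_C hfC
  set R := (2*C+1)/ρ with hR
  have hR0 : 0 < R := by positivity
  have hcont : ContinuousOn Vext (Set.Icc 0 R) := by
    intro x hx
    rcases eq_or_lt_of_le hx.1 with h0 | h0
    · have h1 : ContinuousWithinAt Vext (Set.Ioi 0) 0 := by
        rw [ContinuousWithinAt, hVext0]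
        refine Filter.Tendsto.congr' ?_ htend
        filter_upwards [self_mem_nhdsWithin] with lam hlam
        exact (hVextpos hlam).symm
      have h2 : ContinuousWithinAt Vext (Set.Ici 0) 0 := by
        rw [show Set.Ici (0:ℝ) = insert 0 (Set.Ioi 0) by rw [Set.Ioi_insert]]
        exact h1.insert
      rw [← h0]
      exact h2.mono Set.Icc_subset_Ici_self
    · have h1 := VD_contAt hf hfC hε hC hVD h0
      have h2 : ContinuousAt Vext x := by
        refine h1.congr ?_
        filter_upwards [eventually_gt_nhds h0] with lam hlam
        exact (hVextpos hlam).symm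
      exact h2.continuousWithinAt
  obtain ⟨ls, hls, hlsmin⟩ := isCompact_Icc.exists_isMinOn (Set.nonempty_Icc.2 hR0.le) hcont
  have hmin : ∀ lam ∈ Set.Ici (0:ℝ), Vext ls ≤ Vext lam := by
    intro lam hlam
    by_cases hle : lam ≤ R
    · exact isMinOn_iff.1 hlsmin lam ⟨hlam, hle⟩
    · push_neg at hle
      have hlam0 : 0 < lam := hR0.trans hle
      have hlb := VD_lb hf hfC hε hVDJ hlam0
      have h3 : Vext ls ≤ Vext 0 := isMinOn_iff.1 hlsmin 0 ⟨le_refl 0, hR0.le⟩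
      rw [hVext0] at h3
      have h4 : R * ρ = 2*C+1 := div_mul_cancel₀ _ hρ.ne'
      have h5 : 2*C+1 < lam * ρ := by
        calc 2*C+1 = R*ρ := h4.symm
          _ < lam*ρ := (mul_lt_mul_iff_left₀ hρ).2 hle
      rw [hVextpos hlam0]
      linarith
  refine ⟨ls, ⟨hls.1, hmin⟩, ?_⟩
  intro y hy
  obtain ⟨hy0, hymin⟩ := hy
  by_contra hne
  rcases lt_or_gt_of_ne hne with h | h
  · exact no_two_min hf hfC hε hρ hVDJ hVext htend hy0 h hymin hmin
  · exact no_two_min hf hfC hε hρ hVDJ hVext htend hls.1 h hmin hymin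
end

section
/- For each c = 1, …, C let Q_c be a probability measure on a measurable space Y_c and f_c : Y_c → ℝ a bounded measurable function, and let ε > 0, ρ ≥ 0. Then the joint objective 𝒱(λ₁, …, λ_C) := Σ_{c=1}^C [ λ_c ρ + λ_c ε · log ∫_{Y_c} exp(f_c(y)/(λ_c ε)) dQ_c(y) ] is convex on (0, ∞)^C; moreover, for every index c such that f_c is not Q_c-almost surely constant, the map λ_c ↦ 𝒱(λ₁, …, λ_C) (with the other coordinates held fixed) is strictly convex on (0, ∞). -/
open MeasureTheory Real Set

section Aux

variable {Y : Type*} [MeasurableSpace Y] (Q : Measure Y) [IsProbabilityMeasure Q]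
  (f : Y → ℝ)

lemma aux_int (hf : Measurable f) (B : ℝ) (hfb : ∀ y, |f y| ≤ B) (s : ℝ) :
    Integrable (fun y => Real.exp (s * f y)) Q := by
  refine (integrable_const (Real.exp (|s| * B))).mono'
    ((hf.const_mul s).exp).aestronglyMeasurable ?_
  filter_upwards with y
  rw [Real.norm_eq_abs, Real.abs_exp]
  refine Real.exp_le_exp.2 (le_trans (le_abs_self _) ?_)
  rw [abs_mul]
  exact mul_le_mul_of_nonneg_left (hfb y) (abs_nonneg s)

lemma aux_pos (hf : Measurable f) (B : ℝ) (hfb : ∀ y, |f y| ≤ B) (s : ℝ) :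
    0 < ∫ y, Real.exp (s * f y) ∂Q :=
  integral_exp_pos (aux_int Q f hf B hfb s)

lemma aux_key (hf : Measurable f) (B : ℝ) (hfb : ∀ y, |f y| ≤ B)
    (s s₁ s₂ θ : ℝ) (hθ0 : 0 < θ) (hθ1 : θ < 1)
    (hs : s = θ * s₁ + (1 - θ) * s₂) :
    Real.log (∫ y, Real.exp (s * f y) ∂Q)
      ≤ θ * Real.log (∫ y, Real.exp (s₁ * f y) ∂Q)
        + (1 - θ) * Real.log (∫ y, Real.exp (s₂ * f y) ∂Q) ∧
    ((¬ ∃ c₀ : ℝ, ∀ᵐ y ∂Q, f y = c₀) → s₁ ≠ s₂ →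
      Real.log (∫ y, Real.exp (s * f y) ∂Q)
        < θ * Real.log (∫ y, Real.exp (s₁ * f y) ∂Q)
          + (1 - θ) * Real.log (∫ y, Real.exp (s₂ * f y) ∂Q)) := by
  set I₁ := ∫ y, Real.exp (s₁ * f y) ∂Q with hI₁def
  set I₂ := ∫ y, Real.exp (s₂ * f y) ∂Q with hI₂def
  set S := ∫ y, Real.exp (s * f y) ∂Q with hSdef
  have hI₁ : 0 < I₁ := aux_pos Q f hf B hfb s₁
  have hI₂ : 0 < I₂ := aux_pos Q f hf B hfb s₂
  have hS : 0 < S := aux_pos Q f hf B hfb s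
  set c₁ := Real.log I₁ with hc₁
  set c₂ := Real.log I₂ with hc₂
  set K := θ * c₁ + (1 - θ) * c₂ with hK
  -- pointwise inequality from convexity of exp
  have hpt : ∀ y, Real.exp (s * f y - K)
      ≤ θ * Real.exp (s₁ * f y - c₁) + (1 - θ) * Real.exp (s₂ * f y - c₂) := by
    intro y
    have h := convexOn_exp.2 (mem_univ (s₁ * f y - c₁)) (mem_univ (s₂ * f y - c₂))
      hθ0.le (by linarith : (0:ℝ) ≤ 1 - θ) (by ring : θ + (1 - θ) = 1)
    simp only [smul_eq_mul] at h
    have heq : θ * (s₁ * f y - c₁) + (1 - θ) * (s₂ * f y - c₂) = s * f y - K := by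
      rw [hs, hK]; ring
    rwa [heq] at h
  -- the nonnegative function h
  set w : Y → ℝ := fun y =>
    θ * Real.exp (s₁ * f y - c₁) + (1 - θ) * Real.exp (s₂ * f y - c₂)
      - Real.exp (s * f y - K) with hwdef
  have hw0 : ∀ y, 0 ≤ w y := fun y => sub_nonneg.2 (hpt y)
  have hrw1 : ∀ t : ℝ, (fun y => Real.exp (t * f y - Real.log (∫ y, Real.exp (t * f y) ∂Q)))
      = fun y => Real.exp (t * f y) * (∫ y, Real.exp (t * f y) ∂Q)⁻¹ := by
    intro t; funext y
    rw [Real.exp_sub, Real.exp_log (aux_pos Q f hf B hfb t), div_eq_mul_inv]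
  have int1 : Integrable (fun y => Real.exp (s₁ * f y - c₁)) Q := by
    rw [hc₁, hI₁def, hrw1 s₁]
    exact (aux_int Q f hf B hfb s₁).mul_const _
  have int2 : Integrable (fun y => Real.exp (s₂ * f y - c₂)) Q := by
    rw [hc₂, hI₂def, hrw1 s₂]
    exact (aux_int Q f hf B hfb s₂).mul_const _
  have int3 : Integrable (fun y => Real.exp (s * f y - K)) Q := by
    have : (fun y => Real.exp (s * f y - K)) = fun y => Real.exp (s * f y) * (Real.exp K)⁻¹ := by
      funext y; rw [Real.exp_sub, div_eq_mul_inv]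
    rw [this]
    exact (aux_int Q f hf B hfb s).mul_const _
  have int12 : Integrable (fun y => θ * Real.exp (s₁ * f y - c₁)
      + (1 - θ) * Real.exp (s₂ * f y - c₂)) Q :=
    (int1.const_mul θ).add (int2.const_mul (1 - θ))
  have intw : Integrable w Q := int12.sub int3
  have hint1 : ∫ y, Real.exp (s₁ * f y - c₁) ∂Q = 1 := by
    rw [hc₁, hI₁def, hrw1 s₁, integral_mul_const]
    rw [← hI₁def, mul_inv_cancel₀ hI₁.ne']
  have hint2 : ∫ y, Real.exp (s₂ * f y - c₂) ∂Q = 1 := by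
    rw [hc₂, hI₂def, hrw1 s₂, integral_mul_const]
    rw [← hI₂def, mul_inv_cancel₀ hI₂.ne']
  have hint3 : ∫ y, Real.exp (s * f y - K) ∂Q = S * (Real.exp K)⁻¹ := by
    have : (fun y => Real.exp (s * f y - K)) = fun y => Real.exp (s * f y) * (Real.exp K)⁻¹ := by
      funext y; rw [Real.exp_sub, div_eq_mul_inv]
    rw [this, integral_mul_const, ← hSdef]
  have hintw : ∫ y, w y ∂Q = 1 - S * (Real.exp K)⁻¹ := by
    rw [hwdef]
    rw [integral_sub int12 int3]
    rw [integral_add (int1.const_mul θ) (int2.const_mul (1 - θ))]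
    rw [integral_const_mul, integral_const_mul, hint1, hint2, hint3]
    ring
  have hSK : S ≤ Real.exp K := by
    have h0 : 0 ≤ ∫ y, w y ∂Q := integral_nonneg hw0
    rw [hintw] at h0
    have : S * (Real.exp K)⁻¹ ≤ 1 := by linarith
    calc S = S * (Real.exp K)⁻¹ * Real.exp K := by
            field_simp
      _ ≤ 1 * Real.exp K := by
            exact mul_le_mul_of_nonneg_right this (Real.exp_pos K).le
      _ = Real.exp K := one_mul _
  constructor
  · calc Real.log S ≤ Real.log (Real.exp K) := (Real.log_le_log_iff hS (Real.exp_pos K)).2 hSK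
      _ = K := Real.log_exp K
  · intro hne hs12
    have hSK' : S < Real.exp K := by
      rcases lt_or_eq_of_le hSK with hlt | heqSK
      · exact hlt
      · exfalso
        have hint0 : ∫ y, w y ∂Q = 0 := by
          rw [hintw, heqSK, mul_inv_cancel₀ (Real.exp_pos K).ne']; ring
        have hae : w =ᵐ[Q] 0 :=
          (integral_eq_zero_iff_of_nonneg hw0 intw).1 hint0
        apply hne
        refine ⟨(c₁ - c₂) / (s₁ - s₂), ?_⟩
        filter_upwards [hae] with y hy
        have heq : s₁ * f y - c₁ = s₂ * f y - c₂ := by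
          by_contra hne'
          have hstrict := strictConvexOn_exp.2 (mem_univ (s₁ * f y - c₁))
            (mem_univ (s₂ * f y - c₂)) hne' hθ0 (by linarith : (0:ℝ) < 1 - θ)
            (by ring : θ + (1 - θ) = 1)
          simp only [smul_eq_mul] at hstrict
          have heq2 : θ * (s₁ * f y - c₁) + (1 - θ) * (s₂ * f y - c₂) = s * f y - K := by
            rw [hs, hK]; ring
          rw [heq2] at hstrict
          have : 0 < w y := by rw [hwdef]; dsimp only; linarith
          simp only [Pi.zero_apply] at hy
          linarith
        have hs12' : s₁ - s₂ ≠ 0 := sub_ne_zero.2 hs12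
        field_simp
        linarith [heq]
    calc Real.log S < Real.log (Real.exp K) := Real.log_lt_log hS hSK'
      _ = K := Real.log_exp K


lemma aux_comb (hf : Measurable f) (B : ℝ) (hfb : ∀ y, |f y| ≤ B)
    (ε ρ : ℝ) (hε : 0 < ε)
    {t₁ t₂ a b : ℝ} (ht₁ : 0 < t₁) (ht₂ : 0 < t₂) (ha : 0 < a) (hb : 0 < b)
    (hab : a + b = 1) :
    (a * t₁ + b * t₂) * ρ + (a * t₁ + b * t₂) * ε *
        Real.log (∫ y, Real.exp (f y / ((a * t₁ + b * t₂) * ε)) ∂Q)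
      ≤ a * (t₁ * ρ + t₁ * ε * Real.log (∫ y, Real.exp (f y / (t₁ * ε)) ∂Q))
        + b * (t₂ * ρ + t₂ * ε * Real.log (∫ y, Real.exp (f y / (t₂ * ε)) ∂Q)) ∧
    ((¬ ∃ c₀ : ℝ, ∀ᵐ y ∂Q, f y = c₀) → t₁ ≠ t₂ →
      (a * t₁ + b * t₂) * ρ + (a * t₁ + b * t₂) * ε *
          Real.log (∫ y, Real.exp (f y / ((a * t₁ + b * t₂) * ε)) ∂Q)
        < a * (t₁ * ρ + t₁ * ε * Real.log (∫ y, Real.exp (f y / (t₁ * ε)) ∂Q))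
          + b * (t₂ * ρ + t₂ * ε * Real.log (∫ y, Real.exp (f y / (t₂ * ε)) ∂Q))) := by
  have ht : 0 < a * t₁ + b * t₂ := by positivity
  set t := a * t₁ + b * t₂ with htdef
  set θ := a * t₁ / t with hθdef
  have hθ0 : 0 < θ := by positivity
  have hθ1 : θ < 1 := by
    rw [hθdef, div_lt_one ht]
    nlinarith
  have h1θ : 1 - θ = b * t₂ / t := by
    rw [hθdef]
    field_simp
    rw [htdef]; ring
  have hs : (t * ε)⁻¹ = θ * (t₁ * ε)⁻¹ + (1 - θ) * (t₂ * ε)⁻¹ := by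
    have e1 : θ * (t₁ * ε)⁻¹ = a / (t * ε) := by
      rw [hθdef]; field_simp
    have e2 : (1 - θ) * (t₂ * ε)⁻¹ = b / (t * ε) := by
      rw [h1θ]; field_simp
    rw [e1, e2, ← add_div, hab, one_div]
  have hdiv : ∀ u : ℝ, 0 < u → (fun y => Real.exp (f y / (u * ε)))
      = fun y => Real.exp ((u * ε)⁻¹ * f y) := by
    intro u hu; funext y; rw [div_eq_inv_mul]
  have hkey := aux_key Q f hf B hfb ((t * ε)⁻¹) ((t₁ * ε)⁻¹) ((t₂ * ε)⁻¹) θ hθ0 hθ1 hs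
  rw [hdiv t ht, hdiv t₁ ht₁, hdiv t₂ ht₂]
  set L := Real.log (∫ y, Real.exp ((t * ε)⁻¹ * f y) ∂Q) with hL
  set L₁ := Real.log (∫ y, Real.exp ((t₁ * ε)⁻¹ * f y) ∂Q) with hL₁
  set L₂ := Real.log (∫ y, Real.exp ((t₂ * ε)⁻¹ * f y) ∂Q) with hL₂
  have hc1 : t * ε * θ = a * (t₁ * ε) := by
    rw [hθdef]; field_simp
  have hc2 : t * ε * (1 - θ) = b * (t₂ * ε) := by
    rw [h1θ]; field_simp
  have htρ : t * ρ = a * (t₁ * ρ) + b * (t₂ * ρ) := by rw [htdef]; ring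
  have h2 : t * ε * (θ * L₁ + (1 - θ) * L₂) = a * (t₁ * ε * L₁) + b * (t₂ * ε * L₂) := by
    linear_combination L₁ * hc1 + L₂ * hc2
  constructor
  · have h := mul_le_mul_of_nonneg_left hkey.1 (by positivity : (0:ℝ) ≤ t * ε)
    rw [h2] at h
    linarith [h, htρ]
  · intro hne ht12
    have hs12 : (t₁ * ε)⁻¹ ≠ (t₂ * ε)⁻¹ := by
      intro hcon
      exact ht12 (mul_right_cancel₀ hε.ne' (inv_inj.1 hcon))
    have h := mul_lt_mul_of_pos_left (hkey.2 hne hs12) (by positivity : (0:ℝ) < t * ε)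
    rw [h2] at h
    linarith [h, htρ]

lemma aux_convexOn (hf : Measurable f) (B : ℝ) (hfb : ∀ y, |f y| ≤ B)
    (ε ρ : ℝ) (hε : 0 < ε) :
    ConvexOn ℝ (Ioi (0:ℝ))
      (fun t => t * ρ + t * ε * Real.log (∫ y, Real.exp (f y / (t * ε)) ∂Q)) := by
  refine ⟨convex_Ioi 0, ?_⟩
  intro x hx y hy a b ha hb hab
  simp only [smul_eq_mul]
  rcases eq_or_lt_of_le ha with rfl | ha'
  · simp only [zero_mul, zero_add] at hab ⊢
    rw [hab]; simp
  rcases eq_or_lt_of_le hb with rfl | hb'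
  · simp only [zero_mul, add_zero] at hab ⊢
    rw [hab]; simp
  exact (aux_comb Q f hf B hfb ε ρ hε hx hy ha' hb' hab).1

lemma aux_strictConvexOn (hf : Measurable f) (B : ℝ) (hfb : ∀ y, |f y| ≤ B)
    (ε ρ : ℝ) (hε : 0 < ε) (hne : ¬ ∃ c₀ : ℝ, ∀ᵐ y ∂Q, f y = c₀) :
    StrictConvexOn ℝ (Ioi (0:ℝ))
      (fun t => t * ρ + t * ε * Real.log (∫ y, Real.exp (f y / (t * ε)) ∂Q)) := by
  refine ⟨convex_Ioi 0, ?_⟩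
  intro x hx y hy hxy a b ha hb hab
  simp only [smul_eq_mul]
  exact (aux_comb Q f hf B hfb ε ρ hε hx hy ha hb hab).2 hne hxy

end Aux

/-- Multi-class convexity: the joint Sinkhorn DRO dual objective
`𝒱(λ₁,…,λ_C) = Σ_c [λ_c ρ + λ_c ε log ∫ exp(f_c/(λ_c ε)) dQ_c]` is convex on `(0,∞)^C`,
and is strictly convex in each coordinate `c` for which `f_c` is not `Q_c`-a.s. constant. -/
theorem sinkhorn_dual_multiclass_convex {C : ℕ} {Y : Fin C → Type*}
    [∀ c, MeasurableSpace (Y c)]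
    (Q : ∀ c, Measure (Y c)) [∀ c, IsProbabilityMeasure (Q c)]
    (f : ∀ c, Y c → ℝ) (hf : ∀ c, Measurable (f c))
    (Bd : Fin C → ℝ) (hfb : ∀ c y, |f c y| ≤ Bd c)
    (ε ρ : ℝ) (hε : 0 < ε) (hρ : 0 ≤ ρ)
    (V : (Fin C → ℝ) → ℝ)
    (hV : ∀ lam : Fin C → ℝ,
      V lam = ∑ c, (lam c * ρ +
        lam c * ε * Real.log (∫ y, Real.exp (f c y / (lam c * ε)) ∂(Q c)))) :
    ConvexOn ℝ {lam : Fin C → ℝ | ∀ c, 0 < lam c} V ∧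
    ∀ lam : Fin C → ℝ, (∀ c, 0 < lam c) → ∀ c : Fin C,
      (¬ ∃ c₀ : ℝ, ∀ᵐ y ∂(Q c), f c y = c₀) →
      StrictConvexOn ℝ (Set.Ioi (0 : ℝ)) (fun t => V (Function.update lam c t)) := by
  set G : Fin C → ℝ → ℝ := fun c t =>
    t * ρ + t * ε * Real.log (∫ y, Real.exp (f c y / (t * ε)) ∂(Q c)) with hG
  have hVG : ∀ lam : Fin C → ℝ, V lam = ∑ c, G c (lam c) := hV
  have hGconv : ∀ c, ConvexOn ℝ (Set.Ioi (0:ℝ)) (G c) := fun c =>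
    aux_convexOn (Q c) (f c) (hf c) (Bd c) (hfb c) ε ρ hε
  have hSconv : Convex ℝ {lam : Fin C → ℝ | ∀ c, 0 < lam c} := by
    have : {lam : Fin C → ℝ | ∀ c, 0 < lam c}
        = Set.pi Set.univ (fun _ : Fin C => Set.Ioi (0:ℝ)) := by
      ext lam; simp [Set.mem_pi]
    rw [this]
    exact convex_pi fun i _ => convex_Ioi 0
  constructor
  · refine ⟨hSconv, ?_⟩
    intro p hp q hq a b ha hb hab
    simp only [smul_eq_mul]
    rw [hVG, hVG, hVG]
    have hc : ∀ c : Fin C, G c ((a • p + b • q) c)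
        ≤ a * G c (p c) + b * G c (q c) := by
      intro c
      have := (hGconv c).2 (hp c) (hq c) ha hb hab
      simpa [smul_eq_mul] using this
    calc ∑ c, G c ((a • p + b • q) c)
        ≤ ∑ c, (a * G c (p c) + b * G c (q c)) := Finset.sum_le_sum fun c _ => hc c
      _ = a * ∑ c, G c (p c) + b * ∑ c, G c (q c) := by
          rw [Finset.sum_add_distrib, Finset.mul_sum, Finset.mul_sum]
  · intro lam hlam c hnc
    have hfun : (fun t => V (Function.update lam c t))
        = fun t => G c t + ∑ c' ∈ (Finset.univ \ {c}), G c' (lam c') := by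
      funext t
      rw [hVG]
      have hupd : ∀ c' : Fin C, G c' (Function.update lam c t c')
          = Function.update (fun c' => G c' (lam c')) c (G c t) c' := by
        intro c'
        by_cases h : c' = c
        · subst h; simp
        · simp [Function.update_of_ne h]
      simp_rw [hupd]
      rw [Finset.sum_update_of_mem (Finset.mem_univ c)]
    rw [hfun]
    exact (aux_strictConvexOn (Q c) (f c) (hf c) (Bd c) (hfb c) ε ρ hε hnc).add_const _
end

section
/- Let Q be a probability measure on a measurable space Y and let f : Y → ℝ be bounded and measurable. Then λ · log ∫_Y exp(f(y)/λ) dQ(y) → essSup_Q f (the Q-essential supremum of f) as λ → 0⁺. -/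
open MeasureTheory

/-- As `λ → 0⁺`, the smoothed value `λ log ∫ exp(f/λ) dQ` tends to the `Q`-essential
supremum of `f`. -/
theorem smoothed_value_tendsto_essSup {Y : Type*} [MeasurableSpace Y]
    (Q : Measure Y) [IsProbabilityMeasure Q]
    (f : Y → ℝ) (hf : Measurable f) (C : ℝ) (hfC : ∀ y, |f y| ≤ C) :
    Filter.Tendsto (fun lam : ℝ => lam * Real.log (∫ y, Real.exp (f y / lam) ∂Q))
      (nhdsWithin 0 (Set.Ioi (0 : ℝ))) (nhds (essSup f Q)) := by
  have hQ0 : Q ≠ 0 := IsProbabilityMeasure.ne_zero Q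
  have hne : (ae Q).NeBot := ae_neBot.2 hQ0
  set M := essSup f Q with hM
  have hbddU : Filter.IsBoundedUnder (· ≤ ·) (ae Q) f :=
    Filter.isBoundedUnder_of ⟨C, fun y => (abs_le.1 (hfC y)).2⟩
  have hbddL : Filter.IsBoundedUnder (· ≥ ·) (ae Q) f :=
    Filter.isBoundedUnder_of ⟨-C, fun y => (abs_le.1 (hfC y)).1⟩
  have hael : ∀ᵐ y ∂Q, f y ≤ M := ae_le_essSup hbddU
  -- integrability
  have hint : ∀ lam : ℝ, 0 < lam → Integrable (fun y => Real.exp (f y / lam)) Q := by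
    intro lam hlam
    refine ⟨((hf.div_const lam).exp).aestronglyMeasurable,
      HasFiniteIntegral.of_bounded (C := Real.exp (C / lam)) ?_⟩
    filter_upwards with y
    rw [Real.norm_eq_abs, abs_of_pos (Real.exp_pos _)]
    exact Real.exp_le_exp.2 (by gcongr; exact (abs_le.1 (hfC y)).2)
  -- positivity of the integral
  have hIpos : ∀ lam : ℝ, 0 < lam → 0 < ∫ y, Real.exp (f y / lam) ∂Q := by
    intro lam hlam
    have h1 : Real.exp (-C / lam) ≤ ∫ y, Real.exp (f y / lam) ∂Q := by
      have := integral_mono (integrable_const (Real.exp (-C / lam))) (hint lam hlam)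
        (fun y => Real.exp_le_exp.2 (by gcongr; exact (abs_le.1 (hfC y)).1))
      simpa using this
    exact lt_of_lt_of_le (Real.exp_pos _) h1
  -- upper bound: g lam ≤ M for lam > 0
  have hub : ∀ lam : ℝ, 0 < lam →
      lam * Real.log (∫ y, Real.exp (f y / lam) ∂Q) ≤ M := by
    intro lam hlam
    have h1 : (∫ y, Real.exp (f y / lam) ∂Q) ≤ Real.exp (M / lam) := by
      have := integral_mono_ae (hint lam hlam) (integrable_const (Real.exp (M / lam)))
        (by filter_upwards [hael] with y hy
            exact Real.exp_le_exp.2 (by gcongr))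
      simpa using this
    have h2 : Real.log (∫ y, Real.exp (f y / lam) ∂Q) ≤ M / lam := by
      rw [← Real.log_exp (M / lam)]
      exact Real.log_le_log (hIpos lam hlam) h1
    calc lam * Real.log (∫ y, Real.exp (f y / lam) ∂Q) ≤ lam * (M / lam) :=
          mul_le_mul_of_nonneg_left h2 hlam.le
      _ = M := mul_div_cancel₀ M hlam.ne'
  refine tendsto_order.2 ⟨?_, ?_⟩
  · -- lower bound
    intro a ha
    set ε : ℝ := (M - a) / 2 with hε
    have hεpos : 0 < ε := by rw [hε]; linarith
    set A : Set Y := {y | M - ε < f y} with hA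
    have hAmeas : MeasurableSet A := measurableSet_lt measurable_const hf
    have hQA : Q A ≠ 0 := by
      intro h0
      have hle : ∀ᵐ y ∂Q, f y ≤ M - ε := by
        rw [ae_iff]
        simpa [hA, not_le] using h0
      have : M ≤ M - ε :=
        Filter.limsup_le_of_le (hbddL.isCoboundedUnder_le) hle
      linarith
    set c : ℝ := (Q A).toReal with hc
    have hcpos : 0 < c := ENNReal.toReal_pos hQA (measure_ne_top Q A)
    have hlow : ∀ lam : ℝ, 0 < lam →
        lam * Real.log c + (M - ε) ≤
          lam * Real.log (∫ y, Real.exp (f y / lam) ∂Q) := by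
      intro lam hlam
      have h1 : c * Real.exp ((M - ε) / lam) ≤ ∫ y, Real.exp (f y / lam) ∂Q := by
        have hind : A.indicator (fun _ => Real.exp ((M - ε) / lam)) ≤
            fun y => Real.exp (f y / lam) := by
          intro y
          by_cases hy : y ∈ A
          · rw [Set.indicator_of_mem hy]
            exact Real.exp_le_exp.2 (by gcongr; exact le_of_lt hy)
          · rw [Set.indicator_of_notMem hy]
            exact (Real.exp_pos _).le
        have := integral_mono ((integrable_const _).indicator hAmeas)
          (hint lam hlam) hind
        rwa [integral_indicator_const _ hAmeas, smul_eq_mul] at this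
      have h2 : Real.log c + (M - ε) / lam ≤
          Real.log (∫ y, Real.exp (f y / lam) ∂Q) := by
        have := Real.log_le_log (by positivity) h1
        rwa [Real.log_mul hcpos.ne' (Real.exp_ne_zero _), Real.log_exp] at this
      calc lam * Real.log c + (M - ε)
          = lam * (Real.log c + (M - ε) / lam) := by
            rw [mul_add, mul_div_cancel₀ _ hlam.ne']
        _ ≤ lam * Real.log (∫ y, Real.exp (f y / lam) ∂Q) :=
            mul_le_mul_of_nonneg_left h2 hlam.le
    have htend : Filter.Tendsto (fun lam : ℝ => lam * Real.log c)
        (nhdsWithin 0 (Set.Ioi (0 : ℝ))) (nhds 0) := by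
      have : Filter.Tendsto (fun lam : ℝ => lam * Real.log c) (nhds 0) (nhds 0) := by
        simpa using (continuous_mul_right (Real.log c)).tendsto (0 : ℝ)
      exact this.mono_left nhdsWithin_le_nhds
    have hev : ∀ᶠ lam in nhdsWithin 0 (Set.Ioi (0 : ℝ)),
        -ε < lam * Real.log c := htend.eventually (eventually_gt_nhds (by linarith))
    filter_upwards [self_mem_nhdsWithin, hev] with lam hlam hev'
    have := hlow lam hlam
    have haM : a = M - 2 * ε := by rw [hε]; ring
    linarith
  · intro a ha
    filter_upwards [self_mem_nhdsWithin] with lam hlam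
    exact lt_of_le_of_lt (hub lam hlam) ha
end

section
/- Let (Y, dist) be a compact metric space with diameter at most D and fixed basepoint y₀, and let k : Y → ℝ be Lipschitz with constant at most L_k and satisfy 0 < m ≤ k(y) ≤ M for all y ∈ Y. For probability measures μ, ν on Y let Ξ(ν) and Ξ(μ) denote the tilted probability measures with densities k/∫k dν and k/∫k dμ respectively. Then W(Ξ(ν), Ξ(μ)) ≤ [ (M + L_k·D)/m + D·M·L_k/m² ] · W(ν, μ). -/
open MeasureTheory

/-- Kantorovich–Rubinstein dual distance: supremum of `|∫ h dμ − ∫ h dν|` over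
`1`-Lipschitz functions `h` vanishing at the basepoint `y₀`. -/
noncomputable def KRdist {Y : Type*} [MetricSpace Y] [MeasurableSpace Y]
    (y₀ : Y) (μ ν : Measure Y) : ℝ :=
  sSup { d : ℝ | ∃ h : Y → ℝ, LipschitzWith 1 h ∧ h y₀ = 0 ∧
    d = |(∫ y, h y ∂μ) - (∫ y, h y ∂ν)| }

/-- Tilted probability measure with density `k / ∫ k dν` with respect to `ν`. -/
noncomputable def tilt {Y : Type*} [MeasurableSpace Y] (k : Y → ℝ) (ν : Measure Y) :
    Measure Y :=
  ν.withDensity (fun y => ENNReal.ofReal (k y / ∫ z, k z ∂ν))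

section Aux

variable {Y : Type*} [MetricSpace Y] [CompactSpace Y] [MeasurableSpace Y] [BorelSpace Y]

lemma lip_integrable {f : Y → ℝ} {c : NNReal} (hf : LipschitzWith c f)
    (ρ : Measure Y) [IsFiniteMeasure ρ] : Integrable f ρ :=
  hf.continuous.integrable_of_hasCompactSupport (HasCompactSupport.of_compactSpace f)

lemma abs_integral_sub_le_KRdist (y₀ : Y) (D : ℝ) (hD : ∀ y y' : Y, dist y y' ≤ D)
    (μ ν : Measure Y) [IsProbabilityMeasure μ] [IsProbabilityMeasure ν]
    {h : Y → ℝ} (hh : LipschitzWith 1 h) (h0 : h y₀ = 0) :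
    |(∫ y, h y ∂μ) - (∫ y, h y ∂ν)| ≤ KRdist y₀ μ ν := by
  apply le_csSup
  · refine ⟨2 * D, ?_⟩
    rintro d ⟨g, hg, hg0, rfl⟩
    have hb : ∀ y, |g y| ≤ D := by
      intro y
      calc |g y| = |g y - g y₀| := by rw [hg0, sub_zero]
        _ ≤ dist y y₀ := by simpa [Real.dist_eq] using hg.dist_le_mul y y₀
        _ ≤ D := hD y y₀
    have hint : ∀ (ρ : Measure Y) [IsProbabilityMeasure ρ], |∫ y, g y ∂ρ| ≤ D := by
      intro ρ _
      calc |∫ y, g y ∂ρ| ≤ ∫ y, |g y| ∂ρ := by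
            simpa [Real.norm_eq_abs] using norm_integral_le_integral_norm (μ := ρ) g
        _ ≤ ∫ _y, D ∂ρ := integral_mono ((lip_integrable hg ρ).abs)
            (integrable_const D) hb
        _ = D := by simp
    calc |(∫ y, g y ∂μ) - (∫ y, g y ∂ν)| ≤ |∫ y, g y ∂μ| + |∫ y, g y ∂ν| :=
          abs_sub _ _
      _ ≤ D + D := add_le_add (hint μ) (hint ν)
      _ = 2 * D := by ring
  · exact ⟨h, hh, h0, rfl⟩

lemma abs_integral_sub_le_KRdist' (y₀ : Y) (D : ℝ) (hD : ∀ y y' : Y, dist y y' ≤ D)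
    (μ ν : Measure Y) [IsProbabilityMeasure μ] [IsProbabilityMeasure ν]
    {h : Y → ℝ} {c : ℝ} (hc : 0 ≤ c) (hh : LipschitzWith (Real.toNNReal c) h)
    (h0 : h y₀ = 0) :
    |(∫ y, h y ∂μ) - (∫ y, h y ∂ν)| ≤ c * KRdist y₀ μ ν := by
  rcases eq_or_lt_of_le hc with hc0 | hc0
  · have : ∀ y, h y = 0 := by
      intro y
      have := hh.dist_le_mul y y₀
      rw [← hc0] at this
      simp only [Real.toNNReal_zero, NNReal.coe_zero, zero_mul] at this
      have := le_antisymm this dist_nonneg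
      rwa [dist_eq_zero, h0] at this
    simp [this, ← hc0]
  · have hlip : LipschitzWith 1 (fun y => h y / c) := by
      apply LipschitzWith.of_dist_le_mul
      intro x y
      have hxy := hh.dist_le_mul x y
      rw [Real.coe_toNNReal _ hc] at hxy
      rw [Real.dist_eq, div_sub_div_same, abs_div, abs_of_pos hc0, div_le_iff₀ hc0]
      calc |h x - h y| = dist (h x) (h y) := (Real.dist_eq _ _).symm
        _ ≤ c * dist x y := hxy
        _ = 1 * dist x y * c := by ring
    have key := abs_integral_sub_le_KRdist y₀ D hD μ ν hlip (by simp [h0])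
    rw [integral_div, integral_div, div_sub_div_same, abs_div,
      abs_of_pos hc0, div_le_iff₀ hc0] at key
    linarith [key]

lemma tilt_integral (k : Y → ℝ) {Lk : NNReal} (hk : LipschitzWith Lk k)
    {m : ℝ} (hm : 0 < m) (hkm : ∀ y, m ≤ k y)
    (ν : Measure Y) [IsProbabilityMeasure ν] (h : Y → ℝ) :
    ∫ y, h y ∂(tilt k ν) = (∫ y, h y * k y ∂ν) / (∫ z, k z ∂ν) := by
  set I := ∫ z, k z ∂ν with hI
  have hmeas : Measurable (fun y => Real.toNNReal (k y / I)) :=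
    (hk.continuous.measurable.div_const I).real_toNNReal
  have : tilt k ν = ν.withDensity (fun y => ((fun y => Real.toNNReal (k y / I)) y : ENNReal)) := by
    unfold tilt
    congr 1
  rw [this, integral_withDensity_eq_integral_smul hmeas]
  rw [← integral_div]
  congr 1
  funext y
  have hpos : 0 ≤ k y / I := by
    apply div_nonneg (le_trans hm.le (hkm y))
    have : m ≤ I := by
      calc m = ∫ _z, m ∂ν := by simp
        _ ≤ I := integral_mono (integrable_const m) (lip_integrable hk ν) hkm
    linarith
  simp [NNReal.smul_def, Real.coe_toNNReal _ hpos]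
  ring

end Aux

/-- Lipschitz stability of the tilting map in the Kantorovich–Rubinstein dual distance. -/
theorem tilt_lipschitz_KRdist {Y : Type*} [MetricSpace Y] [CompactSpace Y]
    [MeasurableSpace Y] [BorelSpace Y]
    (y₀ : Y) (D : ℝ) (hD : ∀ y y' : Y, dist y y' ≤ D)
    (k : Y → ℝ) (Lk m M : ℝ) (hLk : 0 ≤ Lk)
    (hk : LipschitzWith (Real.toNNReal Lk) k)
    (hm : 0 < m) (hkm : ∀ y, m ≤ k y) (hkM : ∀ y, k y ≤ M)
    (μ ν : Measure Y) [IsProbabilityMeasure μ] [IsProbabilityMeasure ν] :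
    KRdist y₀ (tilt k ν) (tilt k μ) ≤
      ((M + Lk * D) / m + D * M * Lk / m ^ 2) * KRdist y₀ ν μ := by
  have hD0 : 0 ≤ D := le_trans dist_nonneg (hD y₀ y₀)
  have hM : 0 < M := lt_of_lt_of_le hm (le_trans (hkm y₀) (hkM y₀))
  set Iν := ∫ z, k z ∂ν with hIν
  set Iμ := ∫ z, k z ∂μ with hIμ
  have hIbound : ∀ (ρ : Measure Y) [IsProbabilityMeasure ρ], m ≤ ∫ z, k z ∂ρ := by
    intro ρ _
    calc m = ∫ _z, m ∂ρ := by simp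
      _ ≤ _ := integral_mono (integrable_const m) (lip_integrable hk ρ) hkm
  have hIν' : 0 < Iν := lt_of_lt_of_le hm (hIbound ν)
  have hIμ' : 0 < Iμ := lt_of_lt_of_le hm (hIbound μ)
  set W := KRdist y₀ ν μ with hW
  -- W ≥ 0
  have hW0 : 0 ≤ W := by
    have := abs_integral_sub_le_KRdist y₀ D hD ν μ (h := fun _ => 0)
      (LipschitzWith.const' 0) rfl
    simpa using this
  -- |Iν - Iμ| ≤ Lk * W
  have hIdiff : |Iν - Iμ| ≤ Lk * W := by
    have hlip : LipschitzWith (Real.toNNReal Lk) (fun y => k y - k y₀) := by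
      apply LipschitzWith.of_dist_le_mul
      intro x y
      simpa [Real.dist_eq] using hk.dist_le_mul x y
    have := abs_integral_sub_le_KRdist' y₀ D hD ν μ hLk hlip (by simp)
    have hint : ∀ (ρ : Measure Y) [IsProbabilityMeasure ρ],
        ∫ y, (k y - k y₀) ∂ρ = (∫ z, k z ∂ρ) - k y₀ := by
      intro ρ _
      rw [integral_sub (lip_integrable hk ρ) (integrable_const _)]
      simp
    rw [hint ν, hint μ] at this
    simpa using this
  apply csSup_le
  · exact ⟨0, fun _ => 0, LipschitzWith.const' 0, rfl, by simp⟩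
  rintro d ⟨h, hh, h0, rfl⟩
  rw [tilt_integral k hk hm hkm ν h, tilt_integral k hk hm hkm μ h]
  set A := ∫ y, h y * k y ∂ν with hA
  set B := ∫ y, h y * k y ∂μ with hB
  have habs_h : ∀ y, |h y| ≤ D := by
    intro y
    calc |h y| = |h y - h y₀| := by rw [h0, sub_zero]
      _ ≤ dist y y₀ := by simpa [Real.dist_eq] using hh.dist_le_mul y y₀
      _ ≤ D := hD y y₀
  -- |A - B| ≤ (M + Lk * D) * W
  have hCpos : 0 < M + Lk * D := by positivity
  have hABl : LipschitzWith (Real.toNNReal (M + Lk * D)) (fun y => h y * k y) := by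
    apply LipschitzWith.of_dist_le_mul
    intro x y
    have h1 : dist (h x * k x) (h y * k y) ≤ |h x| * |k x - k y| + |k y| * |h x - h y| := by
      rw [Real.dist_eq]
      calc |h x * k x - h y * k y| = |h x * (k x - k y) + k y * (h x - h y)| := by ring_nf
        _ ≤ |h x * (k x - k y)| + |k y * (h x - h y)| := abs_add_le _ _
        _ = |h x| * |k x - k y| + |k y| * |h x - h y| := by rw [abs_mul, abs_mul]
    have h2 : |k x - k y| ≤ Lk * dist x y := by
      simpa [Real.dist_eq, Real.coe_toNNReal _ hLk] using hk.dist_le_mul x y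
    have h3 : |h x - h y| ≤ dist x y := by
      simpa [Real.dist_eq] using hh.dist_le_mul x y
    have h4 : |k y| ≤ M := by
      rw [abs_of_pos (lt_of_lt_of_le hm (hkm y))]; exact hkM y
    calc dist (h x * k x) (h y * k y) ≤ |h x| * |k x - k y| + |k y| * |h x - h y| := h1
      _ ≤ D * (Lk * dist x y) + M * dist x y := by
          apply add_le_add
          · exact mul_le_mul (habs_h x) h2 (abs_nonneg _) hD0
          · exact mul_le_mul h4 h3 (abs_nonneg _) hM.le
      _ = ↑(Real.toNNReal (M + Lk * D)) * dist x y := by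
          rw [Real.coe_toNNReal _ hCpos.le]; ring
  have hAB : |A - B| ≤ (M + Lk * D) * W := by
    have := abs_integral_sub_le_KRdist' y₀ D hD ν μ hCpos.le hABl (by simp [h0])
    simpa using this
  -- |B| ≤ D * M
  have hBabs : |B| ≤ D * M := by
    calc |B| ≤ ∫ y, |h y * k y| ∂μ := by
          simpa [Real.norm_eq_abs, abs_mul, ← abs_mul]
            using norm_integral_le_integral_norm (μ := μ) (fun y => h y * k y)
      _ ≤ ∫ _y, D * M ∂μ := by
          apply integral_mono _ (integrable_const _)
          · intro y
            show |h y * k y| ≤ D * M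
            rw [abs_mul]
            have hky : |k y| ≤ M := by
              rw [abs_of_pos (lt_of_lt_of_le hm (hkm y))]; exact hkM y
            exact mul_le_mul (habs_h y) hky (abs_nonneg _) hD0
          · exact Integrable.abs <|
              ((hh.continuous.mul hk.continuous).integrable_of_hasCompactSupport
                (HasCompactSupport.of_compactSpace _))
      _ = D * M := by simp
  -- main computation
  have hdecomp : A / Iν - B / Iμ = (A - B) / Iν + B * (Iμ - Iν) / (Iν * Iμ) := by
    field_simp
    ring
  rw [hdecomp]
  calc |(A - B) / Iν + B * (Iμ - Iν) / (Iν * Iμ)|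
      ≤ |(A - B) / Iν| + |B * (Iμ - Iν) / (Iν * Iμ)| := abs_add_le _ _
    _ = |A - B| / Iν + |B| * |Iμ - Iν| / (Iν * Iμ) := by
        rw [abs_div, abs_div, abs_mul, abs_of_pos hIν', abs_of_pos (mul_pos hIν' hIμ')]
    _ ≤ ((M + Lk * D) * W) / m + (D * M) * (Lk * W) / (m * m) := by
        apply add_le_add
        · apply div_le_div₀ (by positivity) hAB hm (hIbound ν)
        · apply div_le_div₀ (by positivity)
            (mul_le_mul hBabs (by rwa [abs_sub_comm] at hIdiff) (abs_nonneg _) (by positivity))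
            (by positivity)
            (mul_le_mul (hIbound ν) (hIbound μ) hm.le hIν'.le)
    _ = ((M + Lk * D) / m + D * M * Lk / m ^ 2) * W := by ring
end

section
/- Let (Y, dist) be a compact metric space with diameter at most D and fixed basepoint y₀; let k : Y → ℝ be Lipschitz with constant at most L_k and satisfy 0 < m ≤ k(y) ≤ M; let f : Y → ℝ be Lipschitz with constant at most L_f and satisfy |f(y)| ≤ B_f; let ε > 0, ρ ≥ 0, and λ > 0. For a probability measure ν on Y define Φ_ν(λ) := λρ + λε · log ∫_Y exp(f(y)/(λε)) dΞ(ν)(y), where Ξ(ν) is the tilted measure with density k/∫k dν. Then for all probability measures μ, ν on Y: |Φ_ν(λ) − Φ_μ(λ)| ≤ L_f · e^{2B_f/(λε)} · K · W(ν, μ), where K := (M + L_k·D)/m + D·M·L_k/m². -/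
open MeasureTheory

section Aux

variable {Y : Type*} [MetricSpace Y] [CompactSpace Y] [MeasurableSpace Y] [BorelSpace Y]

lemma aux_integrable_of_continuous {h : Y → ℝ} (hc : Continuous h) (θ : Measure Y)
    [IsFiniteMeasure θ] : Integrable h θ :=
  hc.integrable_of_hasCompactSupport (HasCompactSupport.of_compactSpace _)

lemma aux_KR_bddAbove (y₀ : Y) (D : ℝ) (hD : ∀ y y' : Y, dist y y' ≤ D)
    (μ ν : Measure Y) [IsProbabilityMeasure μ] [IsProbabilityMeasure ν] :
    BddAbove { d : ℝ | ∃ h : Y → ℝ, LipschitzWith 1 h ∧ h y₀ = 0 ∧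
      d = |(∫ y, h y ∂μ) - (∫ y, h y ∂ν)| } := by
  refine ⟨2 * D, ?_⟩
  rintro d ⟨h, hLip, h0, rfl⟩
  have hb : ∀ y, ‖h y‖ ≤ D := by
    intro y
    have h1 := hLip.dist_le_mul y y₀
    rw [Real.dist_eq, h0, sub_zero] at h1
    calc ‖h y‖ = |h y| := rfl
      _ ≤ 1 * dist y y₀ := h1
      _ ≤ D := by simpa using hD y y₀
  have h2 : ‖∫ y, h y ∂μ‖ ≤ D := by
    calc ‖∫ y, h y ∂μ‖ ≤ D * (μ Set.univ).toReal :=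
          norm_integral_le_of_norm_le_const (Filter.Eventually.of_forall hb)
      _ = D := by simp
  have h3 : ‖∫ y, h y ∂ν‖ ≤ D := by
    calc ‖∫ y, h y ∂ν‖ ≤ D * (ν Set.univ).toReal :=
          norm_integral_le_of_norm_le_const (Filter.Eventually.of_forall hb)
      _ = D := by simp
  calc |(∫ y, h y ∂μ) - (∫ y, h y ∂ν)| ≤ |∫ y, h y ∂μ| + |∫ y, h y ∂ν| := abs_sub _ _
    _ ≤ 2 * D := by
        have := h2; have := h3
        simp only [Real.norm_eq_abs] at *
        linarith

lemma aux_KR_nonneg (y₀ : Y) (D : ℝ) (hD : ∀ y y' : Y, dist y y' ≤ D)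
    (μ ν : Measure Y) [IsProbabilityMeasure μ] [IsProbabilityMeasure ν] :
    0 ≤ KRdist y₀ μ ν := by
  refine le_csSup (aux_KR_bddAbove y₀ D hD μ ν) ?_
  refine ⟨fun _ => 0, ?_, rfl, by simp⟩
  exact LipschitzWith.of_dist_le_mul fun x y => by simp [dist_nonneg]

lemma aux_abs_integral_sub_le (y₀ : Y) (D : ℝ) (hD : ∀ y y' : Y, dist y y' ≤ D)
    (μ ν : Measure Y) [IsProbabilityMeasure μ] [IsProbabilityMeasure ν]
    (h : Y → ℝ) (C : ℝ) (hC : 0 ≤ C) (hh : LipschitzWith C.toNNReal h) :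
    |(∫ y, h y ∂μ) - (∫ y, h y ∂ν)| ≤ C * KRdist y₀ μ ν := by
  rcases eq_or_lt_of_le hC with hC0 | hC0
  · -- C = 0, h is constant
    have hconst : ∀ y, h y = h y₀ := by
      intro y
      have := hh.dist_le_mul y y₀
      rw [← hC0] at this
      simp only [Real.toNNReal_zero, NNReal.coe_zero, zero_mul] at this
      have := le_antisymm this dist_nonneg
      exact eq_of_dist_eq_zero this
    have : ∀ (θ : Measure Y), IsProbabilityMeasure θ → (∫ y, h y ∂θ) = h y₀ := by
      intro θ hθ
      have : (fun y => h y) = fun _ => h y₀ := funext hconst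
      rw [this, integral_const]; simp
    rw [this μ ‹_›, this ν ‹_›, sub_self, abs_zero, ← hC0, zero_mul]
  · set h' : Y → ℝ := fun y => (h y - h y₀) / C with hh'
    have hCne : C ≠ 0 := ne_of_gt hC0
    have hLip1 : LipschitzWith 1 h' := by
      refine LipschitzWith.of_dist_le_mul fun x y => ?_
      have h1 := hh.dist_le_mul x y
      rw [Real.coe_toNNReal _ hC] at h1
      rw [Real.dist_eq]
      have : h' x - h' y = (h x - h y) / C := by rw [hh']; ring
      rw [this, abs_div, abs_of_pos hC0, div_le_iff₀ hC0]
      calc |h x - h y| = dist (h x) (h y) := (Real.dist_eq _ _).symm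
        _ ≤ C * dist x y := h1
        _ = 1 * dist x y * C := by ring
    have hint : ∀ (θ : Measure Y), IsProbabilityMeasure θ →
        (∫ y, h' y ∂θ) = ((∫ y, h y ∂θ) - h y₀) / C := by
      intro θ hθ
      have hi : Integrable h θ := aux_integrable_of_continuous hh.continuous θ
      rw [hh']
      simp only [div_eq_mul_inv, sub_mul]
      rw [integral_sub (hi.mul_const _) ((integrable_const _).mul_const _)]
      rw [integral_mul_const, integral_mul_const, integral_const]
      simp
    have hmem : |(∫ y, h' y ∂μ) - (∫ y, h' y ∂ν)| ∈
        { d : ℝ | ∃ g : Y → ℝ, LipschitzWith 1 g ∧ g y₀ = 0 ∧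
          d = |(∫ y, g y ∂μ) - (∫ y, g y ∂ν)| } :=
      ⟨h', hLip1, by simp [hh'], rfl⟩
    have hle : |(∫ y, h' y ∂μ) - (∫ y, h' y ∂ν)| ≤ KRdist y₀ μ ν :=
      le_csSup (aux_KR_bddAbove y₀ D hD μ ν) hmem
    have heq : |(∫ y, h' y ∂μ) - (∫ y, h' y ∂ν)| =
        |(∫ y, h y ∂μ) - (∫ y, h y ∂ν)| / C := by
      rw [hint μ ‹_›, hint ν ‹_›, div_sub_div_same, abs_div, abs_of_pos hC0]
      congr 2
      ring
    rw [heq] at hle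
    calc |(∫ y, h y ∂μ) - (∫ y, h y ∂ν)|
        = (|(∫ y, h y ∂μ) - (∫ y, h y ∂ν)| / C) * C := by field_simp
      _ ≤ KRdist y₀ μ ν * C := by
          exact mul_le_mul_of_nonneg_right hle hC
      _ = C * KRdist y₀ μ ν := mul_comm _ _

end Aux

lemma aux_abs_exp_sub_exp {c0 a b : ℝ} (ha : a ≤ c0) (hb : b ≤ c0) :
    |Real.exp a - Real.exp b| ≤ Real.exp c0 * |a - b| := by
  have key : ∀ x y : ℝ, x ≤ y → y ≤ c0 → Real.exp y - Real.exp x ≤ Real.exp c0 * (y - x) := by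
    intro x y hxy hyc
    have h1 : (x - y) + 1 ≤ Real.exp (x - y) := Real.add_one_le_exp _
    have h2 : Real.exp x = Real.exp y * Real.exp (x - y) := by
      rw [← Real.exp_add]; ring_nf
    have h3 : Real.exp y ≤ Real.exp c0 := Real.exp_le_exp.mpr hyc
    have h4 : 0 < Real.exp y := Real.exp_pos _
    nlinarith
  rcases le_total a b with h | h
  · rw [abs_of_nonpos (by simp [Real.exp_le_exp, h]), abs_of_nonpos (by linarith)]
    have := key a b h hb
    linarith
  · rw [abs_of_nonneg (by simp [Real.exp_le_exp, h]), abs_of_nonneg (by linarith)]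
    exact key b a h ha

lemma aux_abs_log_sub_log {t A B : ℝ} (ht : 0 < t) (hA : t ≤ A) (hB : t ≤ B) :
    |Real.log A - Real.log B| ≤ |A - B| / t := by
  have hA0 : 0 < A := ht.trans_le hA
  have hB0 : 0 < B := ht.trans_le hB
  have key : ∀ x y : ℝ, 0 < x → t ≤ x → x ≤ y →
      Real.log y - Real.log x ≤ (y - x) / t := by
    intro x y hx htx hxy
    have hy : 0 < y := hx.trans_le hxy
    have h1 : Real.log y - Real.log x = Real.log (y / x) := (Real.log_div hy.ne' hx.ne').symm
    have h2 : Real.log (y / x) ≤ y / x - 1 := Real.log_le_sub_one_of_pos (by positivity)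
    have h3 : y / x - 1 = (y - x) / x := by field_simp
    have h4 : (y - x) / x ≤ (y - x) / t := by
      apply div_le_div_of_nonneg_left (by linarith) ht htx
    linarith
  rcases le_total A B with h | h
  · rw [abs_of_nonpos (by rw [sub_nonpos]; exact (Real.log_le_log_iff hA0 hB0).mpr h),
      abs_of_nonpos (by linarith)]
    have := key A B hA0 hA h
    have h5 : -(A - B) / t = (B - A) / t := by ring
    linarith
  · rw [abs_of_nonneg (by rw [sub_nonneg]; exact (Real.log_le_log_iff hB0 hA0).mpr h),
      abs_of_nonneg (by linarith)]
    exact key B A hB0 hB h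

/-- Prior-stability of the Sinkhorn DRO dual objective at a fixed `λ > 0`:
`|Φ_ν(λ) − Φ_μ(λ)| ≤ L_f e^{2B_f/(λε)} K · W(ν, μ)`. -/
theorem sinkhorn_dual_prior_stability {Y : Type*} [MetricSpace Y] [CompactSpace Y]
    [MeasurableSpace Y] [BorelSpace Y]
    (y₀ : Y) (D : ℝ) (hD : ∀ y y' : Y, dist y y' ≤ D)
    (k : Y → ℝ) (Lk m M : ℝ) (hLk : 0 ≤ Lk)
    (hk : LipschitzWith (Real.toNNReal Lk) k)
    (hm : 0 < m) (hkm : ∀ y, m ≤ k y) (hkM : ∀ y, k y ≤ M)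
    (f : Y → ℝ) (Lf Bf : ℝ) (hLf : 0 ≤ Lf)
    (hfL : LipschitzWith (Real.toNNReal Lf) f) (hfB : ∀ y, |f y| ≤ Bf)
    (ε ρ lam : ℝ) (hε : 0 < ε) (hρ : 0 ≤ ρ) (hlam : 0 < lam)
    (μ ν : Measure Y) [IsProbabilityMeasure μ] [IsProbabilityMeasure ν] :
    |(lam * ρ + lam * ε * Real.log (∫ y, Real.exp (f y / (lam * ε)) ∂(tilt k ν))) -
      (lam * ρ + lam * ε * Real.log (∫ y, Real.exp (f y / (lam * ε)) ∂(tilt k μ)))| ≤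
      Lf * Real.exp (2 * Bf / (lam * ε)) *
        ((M + Lk * D) / m + D * M * Lk / m ^ 2) * KRdist y₀ ν μ := by
  -- setup
  have hc : 0 < lam * ε := mul_pos hlam hε
  set c := lam * ε with hcdef
  have hcne : c ≠ 0 := ne_of_gt hc
  have hD0 : 0 ≤ D := by have := hD y₀ y₀; simpa using this
  have hBf0 : 0 ≤ Bf := (abs_nonneg _).trans (hfB y₀)
  have hM0 : 0 < M := lt_of_lt_of_le hm ((hkm y₀).trans (hkM y₀))
  set W := KRdist y₀ ν μ with hWdef
  have hW0 : 0 ≤ W := aux_KR_nonneg y₀ D hD ν μ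
  set E := Real.exp (Bf / c) with hEdef
  have hE0 : 0 < E := Real.exp_pos _
  set g : Y → ℝ := fun y => Real.exp (f y / c) with hgdef
  have hfub : ∀ y, f y / c ≤ Bf / c := by
    intro y; gcongr; exact (le_abs_self _).trans (hfB y)
  have hflb : ∀ y, -(Bf / c) ≤ f y / c := by
    intro y
    rw [← neg_div]
    gcongr
    exact (abs_le.mp (hfB y)).1
  have hgub : ∀ y, g y ≤ E := fun y => Real.exp_le_exp.mpr (hfub y)
  have hglb : ∀ y, Real.exp (-(Bf / c)) ≤ g y := fun y => Real.exp_le_exp.mpr (hflb y)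
  set Lg := E * Lf / c with hLgdef
  have hLg0 : 0 ≤ Lg := by rw [hLgdef]; positivity
  have hgdiff : ∀ y y' : Y, |g y - g y'| ≤ Lg * dist y y' := by
    intro y y'
    have h1 : |g y - g y'| ≤ E * |f y / c - f y' / c| :=
      aux_abs_exp_sub_exp (hfub y) (hfub y')
    have h2 : |f y / c - f y' / c| = |f y - f y'| / c := by
      rw [div_sub_div_same, abs_div, abs_of_pos hc]
    have h3 : |f y - f y'| ≤ Lf * dist y y' := by
      have := hfL.dist_le_mul y y'
      rwa [Real.dist_eq, Real.coe_toNNReal _ hLf] at this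
    rw [h2] at h1
    calc |g y - g y'| ≤ E * (|f y - f y'| / c) := h1
      _ ≤ E * ((Lf * dist y y') / c) := by gcongr
      _ = Lg * dist y y' := by rw [hLgdef]; ring
  have hgdev : ∀ y, |g y - g y₀| ≤ Lg * D := by
    intro y
    calc |g y - g y₀| ≤ Lg * dist y y₀ := hgdiff y y₀
      _ ≤ Lg * D := mul_le_mul_of_nonneg_left (hD y y₀) hLg0
  have hkdiff : ∀ x y : Y, |k x - k y| ≤ Lk * dist x y := by
    intro x y
    have := hk.dist_le_mul x y
    rwa [Real.dist_eq, Real.coe_toNNReal _ hLk] at this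
  set q : Y → ℝ := fun y => (g y - g y₀) * k y with hqdef
  set Lq := Lg * M + Lk * (Lg * D) with hLqdef
  have hLq0 : 0 ≤ Lq :=
    add_nonneg (mul_nonneg hLg0 hM0.le) (mul_nonneg hLk (mul_nonneg hLg0 hD0))
  have hqLip : LipschitzWith (Real.toNNReal Lq) q := by
    refine LipschitzWith.of_dist_le_mul fun x y => ?_
    rw [Real.dist_eq, Real.coe_toNNReal _ hLq0]
    have hsplit : q x - q y = (g x - g y) * k x + (g y - g y₀) * (k x - k y) := by
      simp only [hqdef]; ring
    have hkx : |k x| ≤ M := abs_le.mpr ⟨by linarith [hkm x], hkM x⟩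
    calc |q x - q y| = |(g x - g y) * k x + (g y - g y₀) * (k x - k y)| := by rw [hsplit]
      _ ≤ |(g x - g y) * k x| + |(g y - g y₀) * (k x - k y)| := abs_add_le _ _
      _ = |g x - g y| * |k x| + |g y - g y₀| * |k x - k y| := by rw [abs_mul, abs_mul]
      _ ≤ (Lg * dist x y) * M + (Lg * D) * (Lk * dist x y) :=
          add_le_add
            (mul_le_mul (hgdiff x y) hkx (abs_nonneg _) (mul_nonneg hLg0 dist_nonneg))
            (mul_le_mul (hgdev y) (hkdiff x y) (abs_nonneg _) (mul_nonneg hLg0 hD0))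
      _ = Lq * dist x y := by rw [hLqdef]; ring
  have hkc : Continuous k := hk.continuous
  have hgc : Continuous g := by
    rw [hgdef]; exact Real.continuous_exp.comp (hfL.continuous.div_const c)
  have hqc : Continuous q := by
    rw [hqdef]; exact (hgc.sub continuous_const).mul hkc
  -- bounds on ∫ k
  have hKm : ∀ (θ : Measure Y), IsProbabilityMeasure θ → m ≤ ∫ z, k z ∂θ := by
    intro θ hθ
    have := integral_mono (integrable_const m) (aux_integrable_of_continuous hkc θ)
      (fun y => hkm y)
    simpa using this
  have hKM : ∀ (θ : Measure Y), IsProbabilityMeasure θ → (∫ z, k z ∂θ) ≤ M := by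
    intro θ hθ
    have := integral_mono (aux_integrable_of_continuous hkc θ) (integrable_const M)
      (fun y => hkM y)
    simpa using this
  -- tilt integral formula
  have tilt_int : ∀ (θ : Measure Y), IsProbabilityMeasure θ →
      (∫ y, g y ∂(tilt k θ)) = (∫ y, k y * g y ∂θ) / (∫ z, k z ∂θ) := by
    intro θ hθ
    have hKpos : 0 < ∫ z, k z ∂θ := lt_of_lt_of_le hm (hKm θ hθ)
    have hmeas : Measurable fun y => Real.toNNReal (k y / ∫ z, k z ∂θ) :=
      (continuous_real_toNNReal.comp (hkc.div_const _)).measurable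
    have hcoe : (fun y => ENNReal.ofReal (k y / ∫ z, k z ∂θ)) =
        fun y => ((Real.toNNReal (k y / ∫ z, k z ∂θ) : NNReal) : ENNReal) := rfl
    rw [tilt, hcoe, integral_withDensity_eq_integral_smul hmeas]
    have hptw : ∀ y, (Real.toNNReal (k y / ∫ z, k z ∂θ)) • g y
        = (k y * g y) / (∫ z, k z ∂θ) := by
      intro y
      rw [NNReal.smul_def, smul_eq_mul,
        Real.coe_toNNReal _ (div_nonneg (hm.le.trans (hkm y)) hKpos.le)]
      ring
    rw [integral_congr_ae (Filter.Eventually.of_forall hptw), integral_div]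
  -- restate the goal
  show |(lam * ρ + c * Real.log (∫ y, g y ∂(tilt k ν))) -
      (lam * ρ + c * Real.log (∫ y, g y ∂(tilt k μ)))| ≤
      Lf * Real.exp (2 * Bf / c) * ((M + Lk * D) / m + D * M * Lk / m ^ 2) * W
  rw [tilt_int ν ‹_›, tilt_int μ ‹_›]
  set K1 := ∫ z, k z ∂ν with hK1def
  set K2 := ∫ z, k z ∂μ with hK2def
  set N1 := ∫ y, k y * g y ∂ν with hN1def
  set N2 := ∫ y, k y * g y ∂μ with hN2def
  set R1 := ∫ y, q y ∂ν with hR1def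
  set R2 := ∫ y, q y ∂μ with hR2def
  have hK1m : m ≤ K1 := hKm ν ‹_›
  have hK2m : m ≤ K2 := hKm μ ‹_›
  have hK1M : K1 ≤ M := hKM ν ‹_›
  have hK2M : K2 ≤ M := hKM μ ‹_›
  have hK10 : 0 < K1 := lt_of_lt_of_le hm hK1m
  have hK20 : 0 < K2 := lt_of_lt_of_le hm hK2m
  -- decomposition N = g y₀ * K + R
  have hNdec : ∀ (θ : Measure Y), IsProbabilityMeasure θ →
      (∫ y, k y * g y ∂θ) = g y₀ * (∫ z, k z ∂θ) + (∫ y, q y ∂θ) := by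
    intro θ hθ
    have h1 : (∫ y, k y * g y ∂θ) = ∫ y, (g y₀ * k y + q y) ∂θ := by
      apply integral_congr_ae
      filter_upwards with y
      simp only [hqdef]; ring
    rw [h1, integral_add ((aux_integrable_of_continuous hkc θ).const_mul _)
      (aux_integrable_of_continuous hqc θ), integral_const_mul]
  have hN1dec : N1 = g y₀ * K1 + R1 := hNdec ν ‹_›
  have hN2dec : N2 = g y₀ * K2 + R2 := hNdec μ ‹_›
  -- lower bounds on A, B
  have hAlb : ∀ (θ : Measure Y), IsProbabilityMeasure θ →
      Real.exp (-(Bf / c)) ≤ (∫ y, k y * g y ∂θ) / (∫ z, k z ∂θ) := by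
    intro θ hθ
    have hKpos : 0 < ∫ z, k z ∂θ := lt_of_lt_of_le hm (hKm θ hθ)
    rw [le_div_iff₀ hKpos]
    have hptw : ∀ y, Real.exp (-(Bf / c)) * k y ≤ k y * g y := by
      intro y
      rw [mul_comm]
      exact mul_le_mul_of_nonneg_left (hglb y) (hm.le.trans (hkm y))
    have := integral_mono ((aux_integrable_of_continuous hkc θ).const_mul _)
      (aux_integrable_of_continuous (hkc.mul hgc) θ) hptw
    rwa [integral_const_mul] at this
  have hAlb1 : Real.exp (-(Bf / c)) ≤ N1 / K1 := hAlb ν ‹_›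
  have hAlb2 : Real.exp (-(Bf / c)) ≤ N2 / K2 := hAlb μ ‹_›
  -- bound on R2
  have hR2b : |R2| ≤ Lg * D * M := by
    have hb : ∀ y, ‖q y‖ ≤ Lg * D * M := by
      intro y
      have hky : |k y| ≤ M := abs_le.mpr ⟨by linarith [hkm y], hkM y⟩
      calc ‖q y‖ = |(g y - g y₀) * k y| := rfl
        _ = |g y - g y₀| * |k y| := abs_mul _ _
        _ ≤ (Lg * D) * M := mul_le_mul (hgdev y) hky (abs_nonneg _)
            (mul_nonneg hLg0 hD0)
        _ = Lg * D * M := by ring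
    calc |R2| = ‖R2‖ := rfl
      _ ≤ (Lg * D * M) * (μ Set.univ).toReal :=
          norm_integral_le_of_norm_le_const (Filter.Eventually.of_forall hb)
      _ = Lg * D * M := by simp
  -- KR bounds
  have habsR : |R1 - R2| ≤ Lq * W := by
    rw [hR1def, hR2def, hWdef]
    exact aux_abs_integral_sub_le y₀ D hD ν μ q Lq hLq0 hqLip
  have habsK : |K1 - K2| ≤ Lk * W := by
    rw [hK1def, hK2def, hWdef]
    exact aux_abs_integral_sub_le y₀ D hD ν μ k Lk hLk hk
  -- |A - B| bound
  have hAB : |N1 / K1 - N2 / K2| ≤ Lq * W / m + (Lg * D * M) * (Lk * W) / m ^ 2 := by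
    have hdecomp : N1 / K1 - N2 / K2
        = (R1 - R2) / K1 + R2 * (K2 - K1) / (K1 * K2) := by
      rw [hN1dec, hN2dec]
      field_simp
      ring
    calc |N1 / K1 - N2 / K2|
        ≤ |(R1 - R2) / K1| + |R2 * (K2 - K1) / (K1 * K2)| := by
          rw [hdecomp]; exact abs_add_le _ _
      _ = |R1 - R2| / K1 + |R2| * |K2 - K1| / (K1 * K2) := by
          rw [abs_div, abs_of_pos hK10, abs_div, abs_mul,
            abs_of_pos (mul_pos hK10 hK20)]
      _ ≤ Lq * W / m + (Lg * D * M) * (Lk * W) / m ^ 2 := by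
          apply add_le_add
          · exact div_le_div₀ (mul_nonneg hLq0 hW0) habsR hm hK1m
          · apply div_le_div₀
              (mul_nonneg (mul_nonneg (mul_nonneg hLg0 hD0) hM0.le)
                (mul_nonneg hLk hW0))
              ?_ (by positivity) ?_
            · exact mul_le_mul hR2b (by rw [abs_sub_comm]; exact habsK)
                (abs_nonneg _) (mul_nonneg (mul_nonneg hLg0 hD0) hM0.le)
            · calc m ^ 2 = m * m := sq m
                _ ≤ K1 * K2 := mul_le_mul hK1m hK2m hm.le (hm.le.trans hK1m)
  -- log bound
  have hlog : |Real.log (N1 / K1) - Real.log (N2 / K2)|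
      ≤ E * |N1 / K1 - N2 / K2| := by
    have h1 := aux_abs_log_sub_log (Real.exp_pos (-(Bf / c))) hAlb1 hAlb2
    have h2 : |N1 / K1 - N2 / K2| / Real.exp (-(Bf / c))
        = E * |N1 / K1 - N2 / K2| := by
      rw [Real.exp_neg, div_eq_mul_inv, inv_inv, mul_comm]
    linarith [h1, h2.le, h2.ge]
  have hEE : E * E = Real.exp (2 * Bf / c) := by
    rw [hEdef, ← Real.exp_add]
    congr 1
    ring
  -- final calculation
  calc |(lam * ρ + c * Real.log (N1 / K1)) - (lam * ρ + c * Real.log (N2 / K2))|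
      = c * |Real.log (N1 / K1) - Real.log (N2 / K2)| := by
        have harg : (lam * ρ + c * Real.log (N1 / K1)) - (lam * ρ + c * Real.log (N2 / K2))
            = c * (Real.log (N1 / K1) - Real.log (N2 / K2)) := by ring
        rw [harg, abs_mul, abs_of_pos hc]
    _ ≤ c * (E * |N1 / K1 - N2 / K2|) := mul_le_mul_of_nonneg_left hlog hc.le
    _ ≤ c * (E * (Lq * W / m + (Lg * D * M) * (Lk * W) / m ^ 2)) :=
        mul_le_mul_of_nonneg_left (mul_le_mul_of_nonneg_left hAB hE0.le) hc.le
    _ = Lf * (E * E) * ((M + Lk * D) / m + D * M * Lk / m ^ 2) * W := by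
        rw [hLqdef, hLgdef]
        field_simp
    _ = Lf * Real.exp (2 * Bf / c) * ((M + Lk * D) / m + D * M * Lk / m ^ 2) * W := by
        rw [hEE]
end

section
/- Let (Y, dist) be a compact metric space with fixed basepoint y₀, and let μ₁, …, μ_B be Borel probability measures on Y all supported in a subset S ⊆ Y of diameter at most D. Then for all weight vectors w, w' in the probability simplex Δ_B = { w ∈ ℝ^B : w_b ≥ 0, Σ_b w_b = 1 }: W( Σ_{b=1}^B w_b μ_b , Σ_{b=1}^B w'_b μ_b ) ≤ (D/2) · ‖w − w'‖₁, where ‖w − w'‖₁ = Σ_b |w_b − w'_b|. -/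
open MeasureTheory

/-- Mixtures of measures supported in a set of diameter at most `D` are
`(D/2)`-Lipschitz in the ℓ¹ distance of the mixture weights. -/
theorem mixture_KRdist_le {Y : Type*} [MetricSpace Y] [CompactSpace Y]
    [MeasurableSpace Y] [BorelSpace Y]
    (y₀ : Y) {B : ℕ} (μ : Fin B → Measure Y) [∀ b, IsProbabilityMeasure (μ b)]
    (S : Set Y) (D : ℝ) (hSdiam : ∀ y ∈ S, ∀ y' ∈ S, dist y y' ≤ D)
    (hsupp : ∀ b, μ b Sᶜ = 0)
    (w w' : Fin B → ℝ) (hw0 : ∀ b, 0 ≤ w b) (hw1 : ∑ b, w b = 1)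
    (hw'0 : ∀ b, 0 ≤ w' b) (hw'1 : ∑ b, w' b = 1) :
    KRdist y₀ (∑ b, ENNReal.ofReal (w b) • μ b) (∑ b, ENNReal.ofReal (w' b) • μ b) ≤
      (D / 2) * ∑ b, |w b - w' b| := by
  have hB : B ≠ 0 := by rintro rfl; simp at hw1
  obtain ⟨b₀⟩ : Nonempty (Fin B) := ⟨⟨0, Nat.pos_of_ne_zero hB⟩⟩
  have hS : S.Nonempty := by
    rcases Set.eq_empty_or_nonempty S with rfl | hS
    · exfalso
      have := hsupp b₀
      simp [measure_univ] at this
    · exact hS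
  obtain ⟨s₀, hs₀⟩ := hS
  have hD0 : 0 ≤ D := by
    have := hSdiam s₀ hs₀ s₀ hs₀
    simpa using this
  have hRHS0 : 0 ≤ (D / 2) * ∑ b, |w b - w' b| :=
    mul_nonneg (by linarith) (Finset.sum_nonneg fun b _ => abs_nonneg _)
  apply Real.sSup_le _ hRHS0
  rintro d ⟨h, hLip, hy0, rfl⟩
  have hcont : Continuous h := hLip.continuous
  have hint : ∀ b : Fin B, Integrable h (μ b) := fun b => by
    have := hcont.continuousOn.integrableOn_compact (μ := μ b) isCompact_univ
    rwa [integrableOn_univ] at this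
  -- bounds on h over S
  have hbdd : IsCompact (h '' Set.univ) := isCompact_univ.image hcont
  have hbddA : BddAbove (h '' S) :=
    hbdd.bddAbove.mono (Set.image_mono (Set.subset_univ _))
  have hbddB : BddBelow (h '' S) :=
    hbdd.bddBelow.mono (Set.image_mono (Set.subset_univ _))
  set M := sSup (h '' S) with hM
  set m := sInf (h '' S) with hm
  have hne : (h '' S).Nonempty := ⟨h s₀, ⟨s₀, hs₀, rfl⟩⟩
  have hleM : ∀ y ∈ S, h y ≤ M := fun y hy => le_csSup hbddA ⟨y, hy, rfl⟩
  have hmle : ∀ y ∈ S, m ≤ h y := fun y hy => csInf_le hbddB ⟨y, hy, rfl⟩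
  have hMm : M - m ≤ D := by
    have : M ≤ m + D := by
      apply csSup_le hne
      rintro x ⟨y, hy, rfl⟩
      have : h y - D ≤ m := by
        apply le_csInf hne
        rintro x ⟨y', hy', rfl⟩
        have h1 : h y - h y' ≤ dist y y' := by
          have := hLip.dist_le_mul y y'
          simp only [NNReal.coe_one, one_mul] at this
          calc h y - h y' ≤ |h y - h y'| := le_abs_self _
          _ = dist (h y) (h y') := (Real.dist_eq _ _).symm
          _ ≤ dist y y' := this
        have h2 := hSdiam y hy y' hy'
        linarith
      linarith
    linarith
  set c : ℝ := (M + m) / 2 with hc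
  have hbd : ∀ y ∈ S, |h y - c| ≤ D / 2 := by
    intro y hy
    rw [abs_le]
    constructor
    · have := hmle y hy; simp only [hc]; linarith
    · have := hleM y hy; simp only [hc]; linarith
  -- centered integrals
  have hIbd : ∀ b : Fin B, |(∫ y, h y ∂(μ b)) - c| ≤ D / 2 := by
    intro b
    have hintc : Integrable (fun y => h y - c) (μ b) := (hint b).sub (integrable_const c)
    have : (∫ y, h y ∂(μ b)) - c = ∫ y, (h y - c) ∂(μ b) := by
      rw [integral_sub (hint b) (integrable_const c), integral_const]
      simp [measure_univ]
    rw [this]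
    have hae : ∀ᵐ y ∂(μ b), ‖h y - c‖ ≤ D / 2 := by
      rw [ae_iff]
      apply measure_mono_null _ (hsupp b)
      intro y hy
      simp only [Set.mem_setOf_eq, not_le] at hy
      simp only [Set.mem_compl_iff]
      intro hyS
      exact absurd (hbd y hyS) (by rw [Real.norm_eq_abs] at hy; linarith)
    calc |∫ y, (h y - c) ∂(μ b)| = ‖∫ y, (h y - c) ∂(μ b)‖ := (Real.norm_eq_abs _).symm
    _ ≤ D / 2 := by
        have := norm_integral_le_of_norm_le_const (μ := μ b) (C := D / 2) hae
        simpa [measure_univ] using this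
  -- compute mixture integrals
  have hmix : ∀ v : Fin B → ℝ, (∀ b, 0 ≤ v b) →
      (∫ y, h y ∂(∑ b, ENNReal.ofReal (v b) • μ b)) = ∑ b, v b * ∫ y, h y ∂(μ b) := by
    intro v hv
    rw [integral_finset_sum_measure]
    · apply Finset.sum_congr rfl
      intro b _
      rw [integral_smul_measure, ENNReal.toReal_ofReal (hv b), smul_eq_mul]
    · intro b _
      exact (hint b).smul_measure (by simp)
  rw [hmix w hw0, hmix w' hw'0]
  have key : (∑ b, w b * ∫ y, h y ∂(μ b)) - (∑ b, w' b * ∫ y, h y ∂(μ b))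
      = ∑ b, (w b - w' b) * ((∫ y, h y ∂(μ b)) - c) := by
    have hcz : ∑ b, (w b - w' b) * c = 0 := by
      rw [← Finset.sum_mul, Finset.sum_sub_distrib, hw1, hw'1]
      ring
    rw [← Finset.sum_sub_distrib]
    calc ∑ b, (w b * ∫ y, h y ∂(μ b) - w' b * ∫ y, h y ∂(μ b))
        = ∑ b, ((w b - w' b) * ((∫ y, h y ∂(μ b)) - c) + (w b - w' b) * c) := by
          apply Finset.sum_congr rfl; intro b _; ring
      _ = ∑ b, (w b - w' b) * ((∫ y, h y ∂(μ b)) - c) := by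
          rw [Finset.sum_add_distrib, hcz, add_zero]
  rw [key]
  calc |∑ b, (w b - w' b) * ((∫ y, h y ∂(μ b)) - c)|
      ≤ ∑ b, |(w b - w' b) * ((∫ y, h y ∂(μ b)) - c)| := Finset.abs_sum_le_sum_abs _ _
    _ ≤ ∑ b, |w b - w' b| * (D / 2) := by
        apply Finset.sum_le_sum
        intro b _
        rw [abs_mul]
        exact mul_le_mul_of_nonneg_left (hIbd b) (abs_nonneg _)
    _ = (D / 2) * ∑ b, |w b - w' b| := by rw [← Finset.sum_mul, mul_comm]
end

section
/- Let Y be a compact metric space, k : Y → ℝ continuous with k(y) > 0 for all y, f : Y → ℝ continuous, ε > 0, ρ ≥ 0, and 0 < a ≤ b. For a Borel probability measure ν on Y define Φ_ν(λ) := λρ + λε · log( (∫_Y exp(f(y)/(λε))·k(y) dν(y)) / (∫_Y k dν) ) for λ > 0. If ν_N → ν★ weakly, then sup_{λ ∈ [a,b]} |Φ_{ν_N}(λ) − Φ_{ν★}(λ)| → 0 as N → ∞; that is, the Sinkhorn DRO dual objectives converge uniformly on every compact subinterval of (0, ∞). -/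
open MeasureTheory

lemma exp_lip (r : ℝ) {u v : ℝ} (hu : |u| ≤ r) (hv : |v| ≤ r) :
    |Real.exp u - Real.exp v| ≤ Real.exp r * |u - v| := by
  have := (convex_Icc (-r) r).norm_image_sub_le_of_norm_deriv_le (f := Real.exp)
    (fun x _ => Real.differentiable_exp x)
    (fun x hx => by
      rw [Real.deriv_exp, Real.norm_eq_abs, abs_of_pos (Real.exp_pos x)]
      exact Real.exp_le_exp.mpr hx.2)
    (abs_le.mp hv) (abs_le.mp hu)
  simpa [Real.norm_eq_abs] using this

lemma log_lip {m x y : ℝ} (hm : 0 < m) (hx : m ≤ x) (hy : m ≤ y) :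
    |Real.log x - Real.log y| ≤ |x - y| / m := by
  have := (convex_Ici m).norm_image_sub_le_of_norm_deriv_le (f := Real.log)
    (fun z hz => Real.differentiableAt_log (lt_of_lt_of_le hm hz).ne')
    (fun z hz => by
      rw [Real.deriv_log, Real.norm_eq_abs,
        abs_of_pos (inv_pos.mpr (lt_of_lt_of_le hm hz))]
      exact inv_anti₀ hm hz)
    hy hx
  rw [div_eq_inv_mul]
  simpa [Real.norm_eq_abs] using this

lemma net_lemma {a b : ℝ} (hab : a ≤ b) (F : ℕ → ℝ → ℝ) (K : ℝ) (hK : 0 ≤ K)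
    (hLip : ∀ N, ∀ lam ∈ Set.Icc a b, ∀ lam' ∈ Set.Icc a b,
      |F N lam - F N lam'| ≤ K * |lam - lam'|)
    (hpt : ∀ lam ∈ Set.Icc a b, Filter.Tendsto (fun N => F N lam) Filter.atTop (nhds 0))
    (δ : ℝ) (hδ : 0 < δ) :
    ∀ᶠ N in Filter.atTop, ∀ lam ∈ Set.Icc a b, |F N lam| ≤ δ := by
  set r := δ / (2 * (K + 1)) with hr
  have hrpos : 0 < r := by positivity
  obtain ⟨t, ht⟩ := IsCompact.elim_finite_subcover (isCompact_Icc (a := a) (b := b))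
    (fun s : Set.Icc a b => Metric.ball (s : ℝ) r)
    (fun _ => Metric.isOpen_ball)
    (fun lam hlam => Set.mem_iUnion.mpr ⟨⟨lam, hlam⟩, Metric.mem_ball_self hrpos⟩)
  have hev : ∀ᶠ N in Filter.atTop, ∀ i ∈ t, |F N (i : ℝ)| < δ / 2 := by
    rw [Filter.eventually_all_finset]
    intro i _
    have := Metric.tendsto_nhds.mp (hpt i i.2) (δ / 2) (by positivity)
    simpa [Real.dist_eq] using this
  filter_upwards [hev] with N hN lam hlam
  obtain ⟨i, hit, hi⟩ : ∃ i ∈ t, lam ∈ Metric.ball (i : ℝ) r := by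
    simpa using ht hlam
  have h1 : |F N lam - F N i| ≤ K * |lam - (i:ℝ)| := hLip N lam hlam i i.2
  have h2 : |lam - (i:ℝ)| < r := by simpa [Real.dist_eq] using hi
  have h3 : K * |lam - (i:ℝ)| ≤ δ / 2 := by
    have : K * |lam - (i:ℝ)| ≤ K * r := by nlinarith [abs_nonneg (lam - (i:ℝ))]
    have hKr : K * r ≤ δ / 2 := by
      rw [hr]
      calc K * (δ / (2 * (K + 1))) ≤ (K + 1) * (δ / (2 * (K + 1))) := by
            apply mul_le_mul_of_nonneg_right (by linarith) (by positivity)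
        _ = δ / 2 := by field_simp
    linarith
  calc |F N lam| ≤ |F N lam - F N i| + |F N i| := by
        simpa using abs_add_le (F N lam - F N i) (F N i)
    _ ≤ δ / 2 + δ / 2 := add_le_add (h1.trans h3) (hN i hit).le
    _ = δ := by ring


/-- Uniform convergence on compact subintervals of `(0, ∞)` of the Sinkhorn DRO dual
objectives `Φ_{ν_N}` to `Φ_{ν★}` under weak convergence `ν_N → ν★`. -/
theorem sinkhorn_dual_uniform_convergence {Y : Type*} [MetricSpace Y] [CompactSpace Y]
    [MeasurableSpace Y] [BorelSpace Y]
    (k : Y → ℝ) (hk : Continuous k) (hkpos : ∀ y, 0 < k y)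
    (f : Y → ℝ) (hf : Continuous f)
    (ε ρ : ℝ) (hε : 0 < ε) (hρ : 0 ≤ ρ)
    (a b : ℝ) (ha : 0 < a) (hab : a ≤ b)
    (Φ : Measure Y → ℝ → ℝ)
    (hΦ : ∀ (ξ : Measure Y) (lam : ℝ),
      Φ ξ lam = lam * ρ + lam * ε *
        Real.log ((∫ y, Real.exp (f y / (lam * ε)) * k y ∂ξ) / (∫ y, k y ∂ξ)))
    (ν : ℕ → Measure Y) (νstar : Measure Y)
    [∀ N, IsProbabilityMeasure (ν N)] [IsProbabilityMeasure νstar]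
    (hweak : ∀ φ : Y → ℝ, Continuous φ →
      Filter.Tendsto (fun N => ∫ y, φ y ∂(ν N)) Filter.atTop
        (nhds (∫ y, φ y ∂νstar))) :
    Filter.Tendsto
      (fun N => ⨆ lam : Set.Icc a b, |Φ (ν N) lam - Φ νstar lam|)
      Filter.atTop (nhds 0) := by
  -- Y is nonempty
  have hY : Nonempty Y := by
    by_contra h
    rw [not_nonempty_iff] at h
    have h1 : νstar Set.univ = 1 := measure_univ
    rw [Set.univ_eq_empty_iff.mpr h, measure_empty] at h1
    exact zero_ne_one h1
  -- bounds on f and k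
  obtain ⟨yM, -, hyM⟩ := isCompact_univ.exists_isMaxOn Set.univ_nonempty
    ((continuous_abs.comp hf).continuousOn (s := Set.univ))
  set M := |f yM| with hMdef
  have hM0 : 0 ≤ M := abs_nonneg _
  have hMb : ∀ y, |f y| ≤ M := fun y => hyM (Set.mem_univ y)
  obtain ⟨ymax, -, hymax⟩ := isCompact_univ.exists_isMaxOn Set.univ_nonempty
    (hk.continuousOn (s := Set.univ))
  obtain ⟨ymin, -, hymin⟩ := isCompact_univ.exists_isMinOn Set.univ_nonempty
    (hk.continuousOn (s := Set.univ))
  set kmin := k ymin with hkmindef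
  set kmax := k ymax with hkmaxdef
  have hkmin : 0 < kmin := hkpos ymin
  have hkminb : ∀ y, kmin ≤ k y := fun y => hymin (Set.mem_univ y)
  have hkmaxb : ∀ y, k y ≤ kmax := fun y => hymax (Set.mem_univ y)
  have hkmax : 0 < kmax := lt_of_lt_of_le hkmin (hkminb ymax)
  set r := M / (a * ε) with hrdef
  have hr0 : 0 ≤ r := by positivity
  have hb : 0 < b := lt_of_lt_of_le ha hab
  -- bound on the exponent
  have hexp_bd : ∀ lam ∈ Set.Icc a b, ∀ y : Y, |f y / (lam * ε)| ≤ r := by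
    intro lam hlam y
    have hlampos : 0 < lam := lt_of_lt_of_le ha hlam.1
    rw [abs_div, abs_of_pos (by positivity : (0:ℝ) < lam * ε)]
    exact div_le_div₀ hM0 (hMb y) (by positivity)
      (mul_le_mul_of_nonneg_right hlam.1 hε.le)
  -- integrability of continuous functions against probability measures
  have integ : ∀ (ξ : Measure Y), IsProbabilityMeasure ξ → ∀ g : Y → ℝ, Continuous g →
      Integrable g ξ := by
    intro ξ hξ g hg
    have : IsProbabilityMeasure ξ := hξ
    exact hg.integrable_of_hasCompactSupport (isClosed_tsupport g).isCompact
  have hGcont : ∀ lam : ℝ, Continuous (fun y => Real.exp (f y / (lam * ε)) * k y) :=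
    fun lam => (Real.continuous_exp.comp (hf.div_const _)).mul hk
  -- notation
  set A : Measure Y → ℝ → ℝ :=
    fun ξ lam => ∫ y, Real.exp (f y / (lam * ε)) * k y ∂ξ with hAdef
  set B : Measure Y → ℝ := fun ξ => ∫ y, k y ∂ξ with hBdef
  set m1 := Real.exp (-r) * kmin with hm1def
  set M1 := Real.exp r * kmax with hM1def
  have hm1 : 0 < m1 := by positivity
  have hM1 : 0 < M1 := by positivity
  -- bounds on B
  have hBbd : ∀ (ξ : Measure Y), IsProbabilityMeasure ξ → kmin ≤ B ξ ∧ B ξ ≤ kmax := by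
    intro ξ hξ
    have : IsProbabilityMeasure ξ := hξ
    constructor
    · have := integral_mono (integrable_const kmin) (integ ξ hξ k hk) hkminb
      simpa [measure_univ] using this
    · have := integral_mono (integ ξ hξ k hk) (integrable_const kmax) hkmaxb
      simpa [measure_univ] using this
  -- bounds on A
  have hAbd : ∀ (ξ : Measure Y), IsProbabilityMeasure ξ → ∀ lam ∈ Set.Icc a b,
      m1 ≤ A ξ lam ∧ A ξ lam ≤ M1 := by
    intro ξ hξ lam hlam
    have : IsProbabilityMeasure ξ := hξ
    have hlo : ∀ y : Y, m1 ≤ Real.exp (f y / (lam * ε)) * k y := by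
      intro y
      have h1 : Real.exp (-r) ≤ Real.exp (f y / (lam * ε)) :=
        Real.exp_le_exp.mpr (neg_le_of_abs_le (hexp_bd lam hlam y))
      exact mul_le_mul h1 (hkminb y) hkmin.le (Real.exp_pos _).le
    have hhi : ∀ y : Y, Real.exp (f y / (lam * ε)) * k y ≤ M1 := by
      intro y
      have h1 : Real.exp (f y / (lam * ε)) ≤ Real.exp r :=
        Real.exp_le_exp.mpr (le_of_abs_le (hexp_bd lam hlam y))
      exact mul_le_mul h1 (hkmaxb y) (hkpos y).le (Real.exp_pos _).le
    constructor
    · have := integral_mono (integrable_const m1) (integ ξ hξ _ (hGcont lam)) hlo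
      simpa [measure_univ] using this
    · have := integral_mono (integ ξ hξ _ (hGcont lam)) (integrable_const M1) hhi
      simpa [measure_univ] using this
  -- Lipschitz constant for A
  set K0 := kmax * Real.exp r * (M / (a ^ 2 * ε)) with hK0def
  have hK00 : 0 ≤ K0 := by positivity
  have hAlip : ∀ (ξ : Measure Y), IsProbabilityMeasure ξ →
      ∀ lam ∈ Set.Icc a b, ∀ lam' ∈ Set.Icc a b,
      |A ξ lam - A ξ lam'| ≤ K0 * |lam - lam'| := by
    intro ξ hξ lam hlam lam' hlam'
    have : IsProbabilityMeasure ξ := hξ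
    have hlp : 0 < lam := lt_of_lt_of_le ha hlam.1
    have hlp' : 0 < lam' := lt_of_lt_of_le ha hlam'.1
    have hptw : ∀ y : Y,
        |Real.exp (f y / (lam * ε)) * k y - Real.exp (f y / (lam' * ε)) * k y|
          ≤ K0 * |lam - lam'| := by
      intro y
      have huv : |f y / (lam * ε) - f y / (lam' * ε)| ≤ M / (a ^ 2 * ε) * |lam - lam'| := by
        have h1 : f y / (lam * ε) - f y / (lam' * ε)
            = f y * (lam' - lam) / (lam * lam' * ε) := by
          field_simp
        rw [h1, abs_div, abs_mul,
          abs_of_pos (by positivity : (0:ℝ) < lam * lam' * ε),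
          abs_sub_comm lam' lam, div_mul_eq_mul_div]
        gcongr
        · exact hMb y
        · nlinarith [hlam.1, hlam'.1]
      have hexp : |Real.exp (f y / (lam * ε)) - Real.exp (f y / (lam' * ε))|
          ≤ Real.exp r * (M / (a ^ 2 * ε) * |lam - lam'|) := by
        calc |Real.exp (f y / (lam * ε)) - Real.exp (f y / (lam' * ε))|
            ≤ Real.exp r * |f y / (lam * ε) - f y / (lam' * ε)| :=
              exp_lip r (hexp_bd lam hlam y) (hexp_bd lam' hlam' y)
          _ ≤ Real.exp r * (M / (a ^ 2 * ε) * |lam - lam'|) := by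
              exact mul_le_mul_of_nonneg_left huv (Real.exp_pos r).le
      calc |Real.exp (f y / (lam * ε)) * k y - Real.exp (f y / (lam' * ε)) * k y|
          = |Real.exp (f y / (lam * ε)) - Real.exp (f y / (lam' * ε))| * k y := by
            rw [← sub_mul, abs_mul, abs_of_pos (hkpos y)]
        _ ≤ (Real.exp r * (M / (a ^ 2 * ε) * |lam - lam'|)) * kmax := by
            apply mul_le_mul hexp (hkmaxb y) (hkpos y).le (by positivity)
        _ = K0 * |lam - lam'| := by rw [hK0def]; ring
    have hint1 := integ ξ hξ _ (hGcont lam)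
    have hint2 := integ ξ hξ _ (hGcont lam')
    calc |A ξ lam - A ξ lam'|
        = |∫ y, (Real.exp (f y / (lam * ε)) * k y
            - Real.exp (f y / (lam' * ε)) * k y) ∂ξ| := by
          rw [integral_sub hint1 hint2]
      _ ≤ ∫ y, |Real.exp (f y / (lam * ε)) * k y
            - Real.exp (f y / (lam' * ε)) * k y| ∂ξ := by
          simpa [Real.norm_eq_abs] using
            norm_integral_le_integral_norm (μ := ξ)
              (f := fun y => Real.exp (f y / (lam * ε)) * k y
                - Real.exp (f y / (lam' * ε)) * k y)
      _ ≤ ∫ _y, K0 * |lam - lam'| ∂ξ :=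
          integral_mono (hint1.sub hint2).abs (integrable_const _) hptw
      _ = K0 * |lam - lam'| := by simp [measure_univ]
  -- rewrite Φ
  have hΦ' : ∀ (ξ : Measure Y), IsProbabilityMeasure ξ → ∀ lam ∈ Set.Icc a b,
      Φ ξ lam = lam * ρ + lam * ε * (Real.log (A ξ lam) - Real.log (B ξ)) := by
    intro ξ hξ lam hlam
    rw [hΦ ξ lam, Real.log_div
      (lt_of_lt_of_le hm1 ((hAbd ξ hξ lam hlam).1)).ne'
      (lt_of_lt_of_le hkmin (hBbd ξ hξ).1).ne']
  -- bounds on the logs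
  set L0 := |Real.log m1| + |Real.log M1| with hL0def
  set LB := |Real.log kmin| + |Real.log kmax| with hLBdef
  have hlogbd : ∀ {m M x : ℝ}, 0 < m → m ≤ x → x ≤ M →
      |Real.log x| ≤ |Real.log m| + |Real.log M| := by
    intro m M x hm hmx hxM
    rw [abs_le]
    constructor
    · have := Real.log_le_log hm hmx
      have h2 : -|Real.log m| ≤ Real.log m := neg_abs_le _
      have h3 : 0 ≤ |Real.log M| := abs_nonneg _
      linarith
    · have := Real.log_le_log (lt_of_lt_of_le hm hmx) hxM
      have h2 : Real.log M ≤ |Real.log M| := le_abs_self _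
      have h3 : 0 ≤ |Real.log m| := abs_nonneg _
      linarith
  -- Lipschitz bound for Φ ξ on [a,b]
  set KΦ := ρ + ε * (L0 + b * K0 / m1 + LB) with hKΦdef
  have hKΦ0 : 0 ≤ KΦ := by
    have h1 : 0 ≤ L0 := by positivity
    have h2 : 0 ≤ LB := by positivity
    have h3 : 0 ≤ b * K0 / m1 := by positivity
    positivity
  have hΦlip : ∀ (ξ : Measure Y), IsProbabilityMeasure ξ →
      ∀ lam ∈ Set.Icc a b, ∀ lam' ∈ Set.Icc a b,
      |Φ ξ lam - Φ ξ lam'| ≤ KΦ * |lam - lam'| := by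
    intro ξ hξ lam hlam lam' hlam'
    have hA1 := hAbd ξ hξ lam hlam
    have hA2 := hAbd ξ hξ lam' hlam'
    have hB1 := hBbd ξ hξ
    have hlogA1 : |Real.log (A ξ lam)| ≤ L0 := hlogbd hm1 hA1.1 hA1.2
    have hlogB : |Real.log (B ξ)| ≤ LB := hlogbd hkmin hB1.1 hB1.2
    have hlogA : |Real.log (A ξ lam) - Real.log (A ξ lam')| ≤ K0 / m1 * |lam - lam'| := by
      calc |Real.log (A ξ lam) - Real.log (A ξ lam')|
          ≤ |A ξ lam - A ξ lam'| / m1 := log_lip hm1 hA1.1 hA2.1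
        _ ≤ K0 * |lam - lam'| / m1 := by
            gcongr
            exact hAlip ξ hξ lam hlam lam' hlam'
        _ = K0 / m1 * |lam - lam'| := by ring
    rw [hΦ' ξ hξ lam hlam, hΦ' ξ hξ lam' hlam']
    set Y1 := (lam - lam') * Real.log (A ξ lam) with hY1
    set Y2 := lam' * (Real.log (A ξ lam) - Real.log (A ξ lam')) with hY2
    set Y3 := (lam - lam') * Real.log (B ξ) with hY3
    have key : (lam * ρ + lam * ε * (Real.log (A ξ lam) - Real.log (B ξ)))
        - (lam' * ρ + lam' * ε * (Real.log (A ξ lam') - Real.log (B ξ)))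
        = (lam - lam') * ρ + ε * (Y1 + Y2 + -Y3) := by
      rw [hY1, hY2, hY3]; ring
    rw [key]
    have h1 : |(lam - lam') * ρ| ≤ ρ * |lam - lam'| := by
      rw [abs_mul, abs_of_nonneg hρ, mul_comm]
    have h2 : |Y1| ≤ L0 * |lam - lam'| := by
      rw [hY1, abs_mul, mul_comm]
      exact mul_le_mul_of_nonneg_right hlogA1 (abs_nonneg _)
    have h3 : |Y2| ≤ b * (K0 / m1 * |lam - lam'|) := by
      rw [hY2, abs_mul]
      apply mul_le_mul _ hlogA (abs_nonneg _) hb.le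
      rw [abs_of_pos (lt_of_lt_of_le ha hlam'.1)]
      exact hlam'.2
    have h4 : |Y3| ≤ LB * |lam - lam'| := by
      rw [hY3, abs_mul, mul_comm]
      exact mul_le_mul_of_nonneg_right hlogB (abs_nonneg _)
    calc |(lam - lam') * ρ + ε * (Y1 + Y2 + -Y3)|
        ≤ |(lam - lam') * ρ| + |ε * (Y1 + Y2 + -Y3)| := abs_add_le _ _
      _ ≤ ρ * |lam - lam'| + ε * (|Y1| + |Y2| + |Y3|) := by
          apply add_le_add h1
          rw [abs_mul, abs_of_pos hε]
          exact mul_le_mul_of_nonneg_left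
            ((abs_add_three Y1 Y2 (-Y3)).trans (by rw [abs_neg])) hε.le
      _ ≤ ρ * |lam - lam'| + ε * (L0 * |lam - lam'|
            + b * (K0 / m1 * |lam - lam'|) + LB * |lam - lam'|) := by
          apply add_le_add le_rfl
          exact mul_le_mul_of_nonneg_left (add_le_add (add_le_add h2 h3) h4) hε.le
      _ = KΦ * |lam - lam'| := by rw [hKΦdef]; ring
  -- pointwise convergence
  have hpt : ∀ lam ∈ Set.Icc a b,
      Filter.Tendsto (fun N => Φ (ν N) lam - Φ νstar lam) Filter.atTop (nhds 0) := by
    intro lam hlam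
    have hA : Filter.Tendsto (fun N => A (ν N) lam) Filter.atTop (nhds (A νstar lam)) :=
      hweak _ (hGcont lam)
    have hB : Filter.Tendsto (fun N => B (ν N)) Filter.atTop (nhds (B νstar)) :=
      hweak _ hk
    have hBpos : 0 < B νstar := lt_of_lt_of_le hkmin (hBbd νstar inferInstance).1
    have hApos : 0 < A νstar lam :=
      lt_of_lt_of_le hm1 (hAbd νstar inferInstance lam hlam).1
    have hdiv : Filter.Tendsto (fun N => A (ν N) lam / B (ν N)) Filter.atTop
        (nhds (A νstar lam / B νstar)) := hA.div hB hBpos.ne'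
    have hlog : Filter.Tendsto (fun N => Real.log (A (ν N) lam / B (ν N))) Filter.atTop
        (nhds (Real.log (A νstar lam / B νstar))) :=
      ((Real.continuousAt_log (div_pos hApos hBpos).ne').tendsto).comp hdiv
    have hΦt : Filter.Tendsto (fun N => Φ (ν N) lam) Filter.atTop (nhds (Φ νstar lam)) := by
      simp only [hΦ]
      exact tendsto_const_nhds.add (hlog.const_mul _)
    simpa using hΦt.sub_const (Φ νstar lam)
  -- the difference functions are uniformly Lipschitz
  set F : ℕ → ℝ → ℝ := fun N lam => Φ (ν N) lam - Φ νstar lam with hFdef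
  have hFlip : ∀ N, ∀ lam ∈ Set.Icc a b, ∀ lam' ∈ Set.Icc a b,
      |F N lam - F N lam'| ≤ (2 * KΦ) * |lam - lam'| := by
    intro N lam hlam lam' hlam'
    have h1 := hΦlip (ν N) inferInstance lam hlam lam' hlam'
    have h2 := hΦlip νstar inferInstance lam hlam lam' hlam'
    have key : F N lam - F N lam'
        = (Φ (ν N) lam - Φ (ν N) lam') - (Φ νstar lam - Φ νstar lam') := by
      simp only [hFdef]; ring
    rw [key, sub_eq_add_neg]
    refine (abs_add_le _ _).trans ?_
    rw [abs_neg]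
    linarith
  have hnet : ∀ δ : ℝ, 0 < δ →
      ∀ᶠ N in Filter.atTop, ∀ lam ∈ Set.Icc a b, |F N lam| ≤ δ :=
    fun δ hδ => net_lemma hab F (2 * KΦ) (by linarith) hFlip hpt δ hδ
  haveI : Nonempty (Set.Icc a b) := Set.Nonempty.to_subtype (Set.nonempty_Icc.mpr hab)
  rw [Metric.tendsto_atTop]
  intro δ hδ
  obtain ⟨N₀, hN₀⟩ := Filter.eventually_atTop.mp (hnet (δ / 2) (half_pos hδ))
  refine ⟨N₀, fun n hn => ?_⟩
  have hbd := hN₀ n hn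
  have hBdd : BddAbove (Set.range fun lam : Set.Icc a b => |F n lam|) :=
    ⟨δ / 2, by rintro x ⟨lam, rfl⟩; exact hbd lam lam.2⟩
  have hsup_le : (⨆ lam : Set.Icc a b, |F n lam|) ≤ δ / 2 :=
    ciSup_le fun lam => hbd lam lam.2
  have hsup_nonneg : 0 ≤ ⨆ lam : Set.Icc a b, |F n lam| :=
    le_trans (abs_nonneg _) (le_ciSup hBdd ⟨a, Set.left_mem_Icc.mpr hab⟩)
  rw [Real.dist_eq, sub_zero, abs_of_nonneg hsup_nonneg]
  linarith
end
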